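/- arXiv:1606.01832 — 8 statements merged into one kernel-verified Lean document; each statement's English description precedes it below -/
import Mathlib

section
/- Let A be a commutative ring and 𝔞 a finitely generated ideal. If {M_k} is an 𝔞-adic system (each M_k is an A/𝔞^{k+1}-module and the induced maps A/𝔞^{k+1} ⊗_{A/𝔞^{k+2}} M_{k+1} → M_k are bijective), then the inverse limit M̂ = lim M_k is 𝔞-adically complete as an A-module. -/
section Aux

variable {A : Type*} [CommRing A]

private lemma map_mem_smul_top {N N' : Type*} [AddCommGroup N] [Module A N]
    [AddCommGroup N'] [Module A N'] (f : N →ₗ[A] N') (I : Ideal A) {z : N}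
    (hz : z ∈ I • (⊤ : Submodule A N)) : f z ∈ I • (⊤ : Submodule A N') :=
  Submodule.smul_induction_on hz
    (fun c hc x _ => by rw [map_smul]; exact Submodule.smul_mem_smul hc trivial)
    (fun u v hu hv => by rw [map_add]; exact add_mem hu hv)

private lemma smul_top_eq_zero {N : Type*} [AddCommGroup N] [Module A N] {I : Ideal A}
    (h : ∀ x : N, ∀ c ∈ I, c • x = 0) {z : N} (hz : z ∈ I • (⊤ : Submodule A N)) : z = 0 :=
  Submodule.smul_induction_on hz (fun c hc x _ => h x c hc)
    (fun u v hu hv => by rw [hu, hv, add_zero])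

private lemma exists_sum_smul {N : Type*} [AddCommGroup N] [Module A N] {I : Ideal A}
    {s : ℕ} {r : Fin s → A} (hr : Ideal.span (Set.range r) = I) (P : Submodule A N) {z : N}
    (hz : z ∈ I • P) : ∃ w : Fin s → N, (∀ i, w i ∈ P) ∧ z = ∑ i, r i • w i := by
  refine Submodule.smul_induction_on hz ?_ ?_
  · intro c hc x hx
    rw [← hr] at hc
    obtain ⟨co, hco⟩ := (Submodule.mem_span_range_iff_exists_fun A).mp hc
    refine ⟨fun i => co i • x, fun i => P.smul_mem _ hx, ?_⟩
    rw [← hco, Finset.sum_smul]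
    exact Finset.sum_congr rfl fun i _ => by rw [smul_smul, smul_eq_mul, mul_comm]
  · rintro u v ⟨w1, hw1, rfl⟩ ⟨w2, hw2, rfl⟩
    refine ⟨w1 + w2, fun i => add_mem (hw1 i) (hw2 i), ?_⟩
    rw [← Finset.sum_add_distrib]
    exact Finset.sum_congr rfl fun i _ => (smul_add _ _ _).symm

variable {M : ℕ → Type*} [∀ k, AddCommGroup (M k)] [∀ k, Module A (M k)]

/-- Composite transition map `M (m + j) → M m`. -/
private def adicChain (ν : ∀ k, M (k + 1) →ₗ[A] M k) : ∀ (j m : ℕ), M (m + j) →ₗ[A] M m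
  | 0, _ => LinearMap.id
  | j+1, m => (adicChain ν j m).comp (ν (m + j))

private lemma adicChain_fixed (ν : ∀ k, M (k + 1) →ₗ[A] M k) {f : ∀ k, M k}
    (hf : ∀ k, ν k (f (k + 1)) = f k) : ∀ (j m : ℕ), adicChain ν j m (f (m + j)) = f m := by
  intro j
  induction j with
  | zero => intro m; rfl
  | succ j ih =>
    intro m
    show adicChain ν j m (ν (m + j) (f (m + j + 1))) = f m
    rw [hf (m + j)]; exact ih m

private lemma heq_nu (ν : ∀ k, M (k + 1) →ₗ[A] M k) {p q : ℕ} (e : p = q)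
    (z : M (p + 1)) (z' : M (q + 1)) (h : HEq z z') : HEq (ν p z) (ν q z') := by
  subst e; rw [eq_of_heq h]

private lemma adicChain_peel (ν : ∀ k, M (k + 1) →ₗ[A] M k) :
    ∀ (j m : ℕ) (z : M (m + 1 + j)) (z' : M (m + j + 1)), HEq z z' →
      ν m (adicChain ν j (m + 1) z) = adicChain ν (j + 1) m z' := by
  intro j
  induction j with
  | zero =>
    intro m z z' h
    show ν m z = ν m z'
    exact congrArg _ (eq_of_heq h)
  | succ j ih =>
    intro m z z' h
    show ν m (adicChain ν j (m + 1) (ν (m + 1 + j) z))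
        = adicChain ν (j + 1) m (ν (m + (j + 1)) z')
    exact ih m _ _ (heq_nu ν (Nat.succ_add m j) z z' h)

end Aux

private lemma heq_fun {M : ℕ → Type*} (y : ∀ m, M m) {p q : ℕ} (e : p = q) :
    HEq (y p) (y q) := by subst e; rfl

private lemma eq_zero_congr {M : ℕ → Type*} [∀ k, AddCommGroup (M k)] (f : ∀ k, M k)
    {p q : ℕ} (e : p = q) (h : f p = 0) : f q = 0 := by subst e; exact h

/-- The limit `M̂ = lim M_k` of an inverse system of `A`-modules, realized as the
submodule of compatible sequences in the product. -/
def adicLimit {A : Type*} [CommRing A] {M : ℕ → Type*}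
    [∀ k, AddCommGroup (M k)] [∀ k, Module A (M k)]
    (ν : ∀ k, M (k + 1) →ₗ[A] M k) : Submodule A (∀ k, M k) where
  carrier := { f | ∀ k, ν k (f (k + 1)) = f k }
  add_mem' := fun hf hg k => by simp [hf k, hg k]
  zero_mem' := fun k => by simp
  smul_mem' := fun r f hf k => by simp [hf k]

section Key

variable {A : Type*} [CommRing A] {a : Ideal A}
variable {M : ℕ → Type*} [∀ k, AddCommGroup (M k)] [∀ k, Module A (M k)]

private lemma key_mem_smul (ha : a.FG)
    (hann : ∀ k (x : M k), ∀ r ∈ a ^ (k + 1), r • x = 0)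
    (ν : ∀ k, M (k + 1) →ₗ[A] M k)
    (hsurj : ∀ k, Function.Surjective (ν k))
    (hker : ∀ k, LinearMap.ker (ν k) = (a ^ (k + 1)) • (⊤ : Submodule A (M (k + 1))))
    (k : ℕ) (x : ↥(adicLimit ν)) (hx : x.1 k = 0) :
    x ∈ (a ^ (k + 1)) • (⊤ : Submodule A ↥(adicLimit ν)) := by
  obtain ⟨s, r, hr⟩ := Submodule.fg_iff_exists_fin_generating_family.mp (Submodule.FG.pow ha (k + 1))
  have hcomp : ∀ j, ν j (x.1 (j + 1)) = x.1 j := x.2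
  have hzero_aux : ∀ j, x.1 (k - j) = 0 := by
    intro j
    induction j with
    | zero => exact hx
    | succ j ih =>
      by_cases h : j < k
      · have e : k - j = (k - (j + 1)) + 1 := by omega
        have h1 : x.1 ((k - (j + 1)) + 1) = 0 := eq_zero_congr x.1 e ih
        rw [← hcomp (k - (j + 1)), h1, map_zero]
      · exact eq_zero_congr x.1 (show k - j = k - (j + 1) by omega) ih
  have hzero : ∀ m, m ≤ k → x.1 m = 0 := fun m hm =>
    eq_zero_congr x.1 (show k - (k - m) = m by omega) (hzero_aux (k - m))
  -- step of the successive approximation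
  have hstep : ∀ m (v : Fin s → M m), (∑ i, r i • v i) = x.1 m →
      ∃ w : Fin s → M (m + 1), (∑ i, r i • w i) = x.1 (m + 1) ∧
        (∀ i, ν m (w i) - v i ∈ (a ^ (m + 1 - (k + 1))) • (⊤ : Submodule A (M m))) := by
    intro m v hv
    by_cases h : m + 1 ≤ k
    · refine ⟨0, ?_, ?_⟩
      · rw [hzero (m + 1) h]; simp
      · intro i
        rw [show m + 1 - (k + 1) = 0 by omega, pow_zero, Ideal.one_eq_top, Submodule.top_smul]
        trivial
    · choose z hz using fun i => hsurj m (v i)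
      have hd : x.1 (m + 1) - ∑ i, r i • z i ∈ LinearMap.ker (ν m) := by
        rw [LinearMap.mem_ker, map_sub, map_sum]
        simp only [map_smul, hz]
        rw [hcomp m, hv, sub_self]
      rw [hker m] at hd
      have he : a ^ (m + 1) = a ^ (k + 1) * a ^ (m + 1 - (k + 1)) := by
        rw [← pow_add]; congr 1; omega
      rw [he, ← smul_eq_mul, Submodule.smul_assoc] at hd
      obtain ⟨w, hwmem, hweq⟩ := exists_sum_smul hr _ hd
      refine ⟨fun i => z i + w i, ?_, ?_⟩
      · simp only [smul_add, Finset.sum_add_distrib]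
        rw [← hweq]; abel
      · intro i
        have h4 : ν m (z i + w i) - v i = ν m (w i) := by rw [map_add, hz i]; abel
        rw [h4]
        exact map_mem_smul_top (ν m) _ (hwmem i)
  have hbase : (∑ i, r i • (0 : M 0)) = x.1 0 := by rw [hzero 0 (Nat.zero_le k)]; simp
  choose step hstep1 hstep2 using hstep
  let Y : ∀ m, {v : Fin s → M m // (∑ i, r i • v i) = x.1 m} :=
    fun m => Nat.rec ⟨0, hbase⟩ (fun m p => ⟨step m p.1 p.2, hstep1 m p.1 p.2⟩) m
  have hY2 : ∀ m i, ν m ((Y (m + 1)).1 i) - (Y m).1 i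
      ∈ (a ^ (m + 1 - (k + 1))) • (⊤ : Submodule A (M m)) :=
    fun m i => hstep2 m (Y m).1 (Y m).2 i
  -- diagonal limit
  let g : Fin s → ∀ m, M m := fun i m => adicChain ν (k + 1) m ((Y (m + (k + 1))).1 i)
  have hgcomp : ∀ i m, ν m (g i (m + 1)) = g i m := by
    intro i m
    show ν m (adicChain ν (k + 1) (m + 1) ((Y (m + 1 + (k + 1))).1 i))
        = adicChain ν (k + 1) m ((Y (m + (k + 1))).1 i)
    have h1 : ν m (adicChain ν (k + 1) (m + 1) ((Y (m + 1 + (k + 1))).1 i))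
        = adicChain ν (k + 1 + 1) m ((Y (m + (k + 1) + 1)).1 i) :=
      adicChain_peel ν (k + 1) m _ _ (heq_fun (fun p => (Y p).1 i) (Nat.succ_add m (k + 1)))
    have h2 : adicChain ν (k + 1 + 1) m ((Y (m + (k + 1) + 1)).1 i)
        = adicChain ν (k + 1) m (ν (m + (k + 1)) ((Y (m + (k + 1) + 1)).1 i)) := rfl
    rw [h1, h2]
    have hd := hY2 (m + (k + 1)) i
    rw [show (m + (k + 1)) + 1 - (k + 1) = m + 1 by omega] at hd
    have h3 : adicChain ν (k + 1) m
        (ν (m + (k + 1)) ((Y (m + (k + 1) + 1)).1 i) - (Y (m + (k + 1))).1 i) = 0 :=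
      smul_top_eq_zero (fun y c hc => hann m y c hc)
        (map_mem_smul_top (adicChain ν (k + 1) m) _ hd)
    rw [map_sub] at h3
    exact sub_eq_zero.mp h3
  have hgmem : ∀ i, g i ∈ adicLimit ν := fun i m => hgcomp i m
  have hsum : ∀ m, (∑ i, r i • g i m) = x.1 m := by
    intro m
    have h5 : (∑ i, r i • g i m)
        = adicChain ν (k + 1) m (∑ i, r i • (Y (m + (k + 1))).1 i) := by
      rw [map_sum]
      exact Finset.sum_congr rfl fun i _ => by rw [map_smul]
    rw [h5, (Y (m + (k + 1))).2, adicChain_fixed ν hcomp (k + 1) m]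
  have hxeq : x = ∑ i, r i • (⟨g i, hgmem i⟩ : ↥(adicLimit ν)) := by
    apply Subtype.ext
    have h6 : ((∑ i, r i • (⟨g i, hgmem i⟩ : ↥(adicLimit ν)) : ↥(adicLimit ν)) : ∀ j, M j)
        = ∑ i, r i • g i := by
      push_cast [Submodule.coe_sum]
      rfl
    rw [h6]
    funext m
    rw [Finset.sum_apply]
    exact (hsum m).symm
  rw [hxeq]
  exact Submodule.sum_mem _ fun i _ =>
    Submodule.smul_mem_smul (hr ▸ Ideal.subset_span ⟨i, rfl⟩) trivial

end Key

/-- If `A` is a commutative ring, `𝔞` a finitely generated ideal, and `{M_k}` an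
`𝔞`-adic system (each `M_k` is killed by `𝔞^{k+1}`, and each transition
`M_{k+1} → M_k` is surjective with kernel `𝔞^{k+1}·M_{k+1}`, i.e. the induced map
`A/𝔞^{k+1} ⊗_{A/𝔞^{k+2}} M_{k+1} → M_k` is bijective), then the inverse limit
`M̂ = lim M_k` is `𝔞`-adically complete. -/
theorem adic_system_limit_isAdicComplete {A : Type*} [CommRing A] (a : Ideal A) (ha : a.FG)
    (M : ℕ → Type*) [∀ k, AddCommGroup (M k)] [∀ k, Module A (M k)]
    (hann : ∀ k (x : M k), ∀ r ∈ a ^ (k + 1), r • x = 0)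
    (ν : ∀ k, M (k + 1) →ₗ[A] M k)
    (hsurj : ∀ k, Function.Surjective (ν k))
    (hker : ∀ k, LinearMap.ker (ν k) = (a ^ (k + 1)) • (⊤ : Submodule A (M (k + 1)))) :
    IsAdicComplete a (↥(adicLimit ν)) := by
  have fwd : ∀ (j : ℕ) (x : ↥(adicLimit ν)),
      x ∈ (a ^ (j + 1)) • (⊤ : Submodule A ↥(adicLimit ν)) → x.1 j = 0 := by
    intro j x hx
    exact smul_top_eq_zero (fun y c hc => hann j y c hc)
      (map_mem_smul_top ((LinearMap.proj j).comp (adicLimit ν).subtype) (a ^ (j + 1)) hx)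
  refine { toIsHausdorff := ⟨?_⟩, toIsPrecomplete := ⟨?_⟩ }
  · intro x hx
    apply Subtype.ext
    funext j
    exact fwd j x (SModEq.zero.mp (hx (j + 1)))
  · intro f hf
    have hgcomp : ∀ m, ν m ((f (m + 1 + 1)).1 (m + 1)) = (f (m + 1)).1 m := by
      intro m
      have h2 := (f (m + 1 + 1)).2 m
      rw [h2]
      have h := SModEq.sub_mem.mp (hf (show m + 1 ≤ m + 1 + 1 by omega))
      have h3 : (f (m + 1)).1 m - (f (m + 1 + 1)).1 m = 0 := fwd m _ h
      exact (sub_eq_zero.mp h3).symm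
    refine ⟨⟨fun m => (f (m + 1)).1 m, hgcomp⟩, fun nn => ?_⟩
    rw [SModEq.sub_mem]
    cases nn with
    | zero =>
      rw [pow_zero, Ideal.one_eq_top, Submodule.top_smul]
      trivial
    | succ t =>
      refine key_mem_smul ha hann ν hsurj hker t _ ?_
      show (f (t + 1)).1 t - (f (t + 1)).1 t = 0
      exact sub_self _
end

section
/- Let A be a commutative ring, 𝔞 a finitely generated ideal, and {M_k} an 𝔞-adic system with limit M̂ = lim M_k. Then for every k ≥ 0 the canonical homomorphism A/𝔞^{k+1} ⊗_A M̂ → M_k is bijective. -/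
/-- The canonical projection `M̂ → M_k`. -/
def adicLimitProj {A : Type*} [CommRing A] {M : ℕ → Type*}
    [∀ k, AddCommGroup (M k)] [∀ k, Module A (M k)]
    (ν : ∀ k, M (k + 1) →ₗ[A] M k) (k : ℕ) : (↥(adicLimit ν)) →ₗ[A] M k where
  toFun f := f.1 k
  map_add' _ _ := rfl
  map_smul' _ _ := rfl

/-- Cast between the modules of the system along an equality of indices. -/
def castM (A : Type*) [CommRing A] {M : ℕ → Type*}
    [∀ k, AddCommGroup (M k)] [∀ k, Module A (M k)] {m n : ℕ} (h : m = n) :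
    M m →ₗ[A] M n where
  toFun x := h ▸ x
  map_add' x y := by subst h; rfl
  map_smul' r x := by subst h; rfl

section AuxAdic

variable {A : Type*} [CommRing A] {M : ℕ → Type*}
    [∀ k, AddCommGroup (M k)] [∀ k, Module A (M k)]

@[simp] lemma castM_self {m : ℕ} (h : m = m) (x : M m) : castM A h x = x := rfl

lemma castM_castM {m n p : ℕ} (h1 : m = n) (h2 : n = p) (x : M m) :
    castM A h2 (castM A h1 x) = castM A (h1.trans h2) x := by subst h1; subst h2; rfl

variable (ν : ∀ k, M (k + 1) →ₗ[A] M k)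

lemma nu_castM {p q : ℕ} (h' : p + 1 = q + 1) (h : p = q) (x : M (p + 1)) :
    ν q (castM A h' x) = castM A h (ν p x) := by subst h; rfl

/-- Iterated transition maps. -/
def nupow : ∀ (m p : ℕ), M (m + p) →ₗ[A] M m
  | _, 0 => LinearMap.id
  | m, p + 1 => (nupow m p).comp (ν (m + p))

lemma nupow_zero_apply (m : ℕ) (x : M m) : nupow ν m 0 x = x := rfl

lemma nupow_succ_apply (m p : ℕ) (x : M (m + (p + 1))) :
    nupow ν m (p + 1) x = nupow ν m p (ν (m + p) x) := rfl

lemma nu_nupow (m : ℕ) : ∀ (p : ℕ) (h : (m + 1) + p = m + (p + 1)) (x : M ((m + 1) + p)),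
    ν m (nupow ν (m + 1) p x) = nupow ν m (p + 1) (castM A h x)
  | 0, h, x => rfl
  | (p + 1), h, x => by
    have h2 : (m + 1) + p = m + (p + 1) := by omega
    calc ν m (nupow ν (m + 1) (p + 1) x)
        = ν m (nupow ν (m + 1) p (ν ((m + 1) + p) x)) := rfl
      _ = nupow ν m (p + 1) (castM A h2 (ν ((m + 1) + p) x)) := nu_nupow m p h2 _
      _ = nupow ν m (p + 1) (ν (m + (p + 1)) (castM A h x)) :=
          congrArg (nupow ν m (p + 1)) (nu_castM ν h h2 x).symm
      _ = nupow ν m ((p + 1) + 1) (castM A h x) := rfl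

lemma apply_mem_smulTop {N P : Type*} [AddCommGroup N] [Module A N] [AddCommGroup P] [Module A P]
    (I : Ideal A) (φ : N →ₗ[A] P) {x : N} (hx : x ∈ I • (⊤ : Submodule A N)) :
    φ x ∈ I • (⊤ : Submodule A P) := by
  have h1 : φ x ∈ (I • (⊤ : Submodule A N)).map φ := Submodule.mem_map_of_mem hx
  rw [Submodule.map_smul''] at h1
  have h2 : I • ((⊤ : Submodule A N).map φ) ≤ I • (⊤ : Submodule A P) :=
    smul_mono_right I le_top
  exact h2 h1

lemma smulTop_eq_zero {N : Type*} [AddCommGroup N] [Module A N] (I : Ideal A)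
    (h : ∀ r ∈ I, ∀ x : N, r • x = 0) {x : N} (hx : x ∈ I • (⊤ : Submodule A N)) : x = 0 :=
  Submodule.smul_induction_on hx (fun r hr n _ => h r hr n)
    (fun x y hx hy => by rw [hx, hy, add_zero])

lemma exists_rep {N : Type*} [AddCommGroup N] [Module A N] {n : ℕ} (r : Fin n → A)
    (P : Submodule A N) {x : N} (hx : x ∈ Submodule.span A (Set.range r) • P) :
    ∃ z : Fin n → N, (∀ i, z i ∈ P) ∧ x = ∑ i, r i • z i := by
  refine Submodule.smul_induction_on hx ?_ ?_
  · intro c hc y hy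
    obtain ⟨d, hd⟩ := (Submodule.mem_span_range_iff_exists_fun A).mp hc
    refine ⟨fun i => d i • y, fun i => P.smul_mem _ hy, ?_⟩
    rw [← hd, Finset.sum_smul]
    exact Finset.sum_congr rfl fun i _ => by
      rw [smul_smul, smul_eq_mul, mul_comm, mul_smul]
  · rintro x y ⟨zx, hzx, rfl⟩ ⟨zy, hzy, rfl⟩
    exact ⟨fun i => zx i + zy i, fun i => P.add_mem (hzx i) (hzy i),
      by simp [smul_add, Finset.sum_add_distrib]⟩

/-- A chain which is compatible up to an error term in `a^j • ⊤` gives rise to an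
element of the adic limit after pushing down `k+1` steps. -/
lemma chain_mem_adicLimit (a : Ideal A)
    (hann : ∀ m (x : M m), ∀ r ∈ a ^ (m + 1), r • x = 0) (k : ℕ) (t : ∀ j, M (k + j))
    (ht : ∀ j, ν (k + j) (t (j + 1)) - t j ∈ (a ^ j) • (⊤ : Submodule A (M (k + j)))) :
    (fun m => nupow ν m (k + 1)
      (castM A (show k + (m + 1) = m + (k + 1) by omega) (t (m + 1)))) ∈ adicLimit ν := by
  intro m
  have h1 : (m + 1) + (k + 1) = m + (k + 2) := by omega
  have h2 : k + (m + 2) = m + (k + 2) := by omega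
  have h3 : k + (m + 1) = m + (k + 1) := by omega
  have e1 : ν m (nupow ν (m + 1) (k + 1)
        (castM A (show k + ((m + 1) + 1) = (m + 1) + (k + 1) by omega) (t (m + 2))))
      = nupow ν m (k + 2) (castM A h2 (t (m + 2))) := by
    rw [nu_nupow ν m (k + 1) h1, castM_castM]
  have e2 : nupow ν m (k + 2) (castM A h2 (t (m + 2)))
      = nupow ν m (k + 1) (castM A h3 (ν (k + (m + 1)) (t (m + 2)))) := by
    rw [nupow_succ_apply]
    exact congrArg _ (nu_castM ν h2 h3 (t (m + 2)))
  have hz : nupow ν m (k + 1) (castM A h3 (ν (k + (m + 1)) (t (m + 2)) - t (m + 1))) = 0 :=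
    smulTop_eq_zero (a ^ (m + 1)) (fun r hr x => hann m x r hr)
      (apply_mem_smulTop (a ^ (m + 1)) (nupow ν m (k + 1))
        (apply_mem_smulTop (a ^ (m + 1)) (castM A h3) (ht (m + 1))))
  have hz' : nupow ν m (k + 1) (castM A h3 (ν (k + (m + 1)) (t (m + 2))))
      - nupow ν m (k + 1) (castM A h3 (t (m + 1))) = 0 := by
    rw [← map_sub, ← map_sub]; exact hz
  show ν m (nupow ν (m + 1) (k + 1)
      (castM A (show k + ((m + 1) + 1) = (m + 1) + (k + 1) by omega) (t (m + 2))))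
    = nupow ν m (k + 1) (castM A (show k + (m + 1) = m + (k + 1) by omega) (t (m + 1)))
  rw [e1, e2]
  exact sub_eq_zero.mp hz'

end AuxAdic

/-- Let `{M_k}` be an `𝔞`-adic system for a finitely generated ideal `𝔞`, with limit `M̂`.
Then for every `k` the canonical homomorphism `A/𝔞^{k+1} ⊗_A M̂ → M_k` is bijective;
equivalently, the canonical projection `M̂ → M_k` is surjective with kernel
`𝔞^{k+1}·M̂`. -/
theorem adic_system_limit_base_change_bijective {A : Type*} [CommRing A]
    (a : Ideal A) (ha : a.FG)
    (M : ℕ → Type*) [∀ k, AddCommGroup (M k)] [∀ k, Module A (M k)]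
    (hann : ∀ k (x : M k), ∀ r ∈ a ^ (k + 1), r • x = 0)
    (ν : ∀ k, M (k + 1) →ₗ[A] M k)
    (hsurj : ∀ k, Function.Surjective (ν k))
    (hker : ∀ k, LinearMap.ker (ν k) = (a ^ (k + 1)) • (⊤ : Submodule A (M (k + 1))))
    (k : ℕ) :
    Function.Surjective (adicLimitProj ν k) ∧
      LinearMap.ker (adicLimitProj ν k) =
        (a ^ (k + 1)) • (⊤ : Submodule A (↥(adicLimit ν))) := by
  have hfc : ∀ (f : ↥(adicLimit ν)) (m p : ℕ), nupow ν m p (f.1 (m + p)) = f.1 m := by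
    intro f m p
    have hc : ∀ q, ν q (f.1 (q + 1)) = f.1 q := f.2
    induction p with
    | zero => rfl
    | succ p ih =>
      rw [nupow_succ_apply,
        show (ν (m + p)) (f.1 (m + (p + 1))) = f.1 (m + p) from hc (m + p)]
      exact ih
  constructor
  · -- surjectivity
    intro x
    choose sec hsec using hsurj
    refine ⟨⟨fun m => nupow ν m (k + 1)
      (castM A (show k + (m + 1) = m + (k + 1) by omega)
        (Nat.rec (motive := fun j => M (k + j)) x (fun j y => sec (k + j) y) (m + 1))), ?_⟩, ?_⟩
    · exact chain_mem_adicLimit ν a hann k (fun j => Nat.rec (motive := fun j => M (k + j)) x (fun j y => sec (k + j) y) j)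
        (fun j => by rw [hsec (k + j)]; simp)
    · show nupow ν k (k + 1)
        (castM A (show k + (k + 1) = k + (k + 1) by omega)
          (Nat.rec (motive := fun j => M (k + j)) x (fun j y => sec (k + j) y) (k + 1))) = x
      rw [castM_self]
      have : ∀ p, nupow ν k p (Nat.rec (motive := fun j => M (k + j)) x (fun j y => sec (k + j) y) p) = x := by
        intro p
        induction p with
        | zero => rfl
        | succ p ih => rw [nupow_succ_apply, hsec (k + p)]; exact ih
      exact this (k + 1)
  · -- kernel
    obtain ⟨n, r, hr⟩ := Submodule.fg_iff_exists_fin_generating_family.mp (Submodule.FG.pow ha (k + 1))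
    have hrmem : ∀ i, r i ∈ a ^ (k + 1) := fun i => by
      rw [← hr]; exact Submodule.subset_span (Set.mem_range_self i)
    refine le_antisymm ?_ ?_
    · -- ker ⊆ a^(k+1) • ⊤
      intro f hf
      have hf' : f.1 k = 0 := hf
      have hc : ∀ q, ν q (f.1 (q + 1)) = f.1 q := f.2
      have hstep : ∀ j (v : Fin n → M (k + j)), (∑ i, r i • v i) = f.1 (k + j) →
          ∃ w : Fin n → M (k + j + 1), ((∑ i, r i • w i) = f.1 (k + j + 1) ∧
            ∀ i, ν (k + j) (w i) - v i ∈ (a ^ j) • (⊤ : Submodule A (M (k + j)))) := by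
        intro j v hv
        choose h hh using fun i => hsurj (k + j) (v i)
        have hy : (f.1 (k + j + 1) - ∑ i, r i • h i) ∈ LinearMap.ker (ν (k + j)) := by
          rw [LinearMap.mem_ker, map_sub, hc (k + j), map_sum]
          simp only [map_smul, hh]
          rw [hv, sub_self]
        have hy2 : (f.1 (k + j + 1) - ∑ i, r i • h i) ∈
            Submodule.span A (Set.range r) •
              ((a ^ j) • (⊤ : Submodule A (M (k + j + 1)))) := by
          rw [hker (k + j)] at hy
          have he : a ^ (k + j + 1) = a ^ (k + 1) * a ^ j := by
            rw [← pow_add]; congr 1; omega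
          rw [he, mul_smul] at hy
          rwa [hr]
        obtain ⟨z, hz, hzy⟩ := exists_rep r _ hy2
        refine ⟨fun i => h i + z i, ?_, ?_⟩
        · have hsplit : (∑ i, r i • (h i + z i))
              = (∑ i, r i • h i) + ∑ i, r i • z i := by
            simp [smul_add, Finset.sum_add_distrib]
          rw [hsplit, ← hzy]
          abel
        · intro i
          have hd : ν (k + j) (h i + z i) - v i = ν (k + j) (z i) := by
            rw [map_add, hh i]; abel
          rw [hd]
          exact apply_mem_smulTop _ (ν (k + j)) (hz i)
      choose w hw1 hw2 using hstep
      have hbase : (∑ i, r i • (0 : M (k + 0))) = f.1 (k + 0) := by simp [hf']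
      obtain ⟨g, hg1, hg2⟩ : ∃ g : ∀ j, Fin n → M (k + j),
          (∀ j, (∑ i, r i • g j i) = f.1 (k + j)) ∧
            (∀ j i, ν (k + j) (g (j + 1) i) - g j i ∈
              (a ^ j) • (⊤ : Submodule A (M (k + j)))) := by
        exact
          let GG : ∀ j, {v : Fin n → M (k + j) // (∑ i, r i • v i) = f.1 (k + j)} :=
            fun j => Nat.rec ⟨0, hbase⟩ (fun j p => ⟨w j p.1 p.2, hw1 j p.1 p.2⟩) j
          ⟨fun j => (GG j).1, fun j => (GG j).2, fun j i => hw2 j (GG j).1 (GG j).2 i⟩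
      have hG : ∀ i, (fun m => nupow ν m (k + 1)
          (castM A (show k + (m + 1) = m + (k + 1) by omega) (g (m + 1) i))) ∈ adicLimit ν :=
        fun i => chain_mem_adicLimit ν a hann k (fun j => g j i) (fun j => hg2 j i)
      have hcf : ∀ p q (h : p = q), castM A h (f.1 p) = f.1 q := by
        intro p q h; subst h; rw [castM_self]
      have hfeq : f = ∑ i, r i • (⟨_, hG i⟩ : ↥(adicLimit ν)) := by
        apply Subtype.ext
        funext m
        have hcomp : ((∑ i, r i • (⟨_, hG i⟩ : ↥(adicLimit ν))) : ↥(adicLimit ν)).1 m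
            = ∑ i, r i • nupow ν m (k + 1)
              (castM A (show k + (m + 1) = m + (k + 1) by omega) (g (m + 1) i)) := by
          have := map_sum (adicLimitProj ν m)
            (fun i => r i • (⟨_, hG i⟩ : ↥(adicLimit ν))) Finset.univ
          simp only [map_smul] at this
          exact this
        rw [hcomp]
        calc f.1 m = nupow ν m (k + 1) (f.1 (m + (k + 1))) := (hfc f m (k + 1)).symm
          _ = nupow ν m (k + 1)
              (castM A (show k + (m + 1) = m + (k + 1) by omega) (f.1 (k + (m + 1)))) := by
              rw [hcf]
          _ = nupow ν m (k + 1)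
              (castM A (show k + (m + 1) = m + (k + 1) by omega) (∑ i, r i • g (m + 1) i)) := by
              rw [hg1]
          _ = ∑ i, r i • nupow ν m (k + 1)
              (castM A (show k + (m + 1) = m + (k + 1) by omega) (g (m + 1) i)) := by
              simp only [map_sum, map_smul]
      rw [hfeq]
      exact Submodule.sum_mem _ fun i _ =>
        Submodule.smul_mem_smul (hrmem i) trivial
    · -- a^(k+1) • ⊤ ⊆ ker
      rw [Submodule.smul_le]
      intro s hs f _
      rw [LinearMap.mem_ker, map_smul]
      exact hann k (adicLimitProj ν k f) s hs
end

section
/- Let A be a commutative ring and 𝔞 a finitely generated ideal. Then every 𝔞-adic system {M_k} is induced by a module; specifically, it is isomorphic (as an inverse system) to the system {A/𝔞^{k+1} ⊗_A M̂} induced by its limit M̂. -/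
/-!
The projection `π_k : M̂ → M_k` is surjective (lift step by step along the surjections `ν`) and
kills `𝔞^{k+1} M̂`. Conversely, since `ker ν_k = 𝔞^{k+1} M_{k+1}` and `π_{k+1}` is surjective,
`ker π_k = 𝔞^{k+1} M̂ + ker π_{k+1}`. With generators `s_1, …, s_n` of `𝔞^{k+1}`, an `f ∈ ker π_k`
is therefore `∑ s_i c_{j,i}` modulo `ker π_{k+j}`, where the corrections `c_{j+1,i} - c_{j,i}` can
be taken in `𝔞^j M̂ ⊆ ker π_{j-1}`. So the coefficients converge in `M̂`, and their limits `c_i`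
give `f = ∑ s_i c_i ∈ 𝔞^{k+1} M̂`.
-/

open Submodule LinearMap

theorem Submodule.exists_sum_smul_eq_of_mem_span_range_smul {R N ι : Type*} [CommSemiring R]
    [AddCommMonoid N] [Module R N] [Fintype ι] (s : ι → R) (P : Submodule R N) {x : N}
    (hx : x ∈ Ideal.span (Set.range s) • P) : ∃ c : ι → N, (∀ i, c i ∈ P) ∧ ∑ i, s i • c i = x := by
  refine smul_induction_on hx (fun r hr y hy => ?_) ?_
  · obtain ⟨b, rfl⟩ := (mem_span_range_iff_exists_fun R).1 hr
    refine ⟨fun i => b i • y, fun i => P.smul_mem _ hy, ?_⟩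
    simp only [Finset.sum_smul, smul_smul, smul_eq_mul, mul_comm]
  · rintro _ _ ⟨c₁, hc₁, rfl⟩ ⟨c₂, hc₂, rfl⟩
    exact ⟨c₁ + c₂, fun i => P.add_mem (hc₁ i) (hc₂ i), by simp [smul_add, Finset.sum_add_distrib]⟩

namespace adicLimit

variable {A : Type*} [CommRing A] {M : ℕ → Type*} [∀ k, AddCommGroup (M k)]
  [∀ k, Module A (M k)] (ν : ∀ k, M (k + 1) →ₗ[A] M k)

def proj (k : ℕ) : adicLimit ν →ₗ[A] M k := (LinearMap.proj k).comp (adicLimit ν).subtype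

theorem comp_proj_succ (k : ℕ) : (ν k).comp (proj ν (k + 1)) = proj ν k :=
  LinearMap.ext fun f => f.2 k

variable {ν}

theorem ext_proj {f g : adicLimit ν} (h : ∀ k, proj ν k f = proj ν k g) : f = g :=
  Subtype.ext (funext h)

theorem antitone_ker_proj : Antitone fun k => ker (proj ν k) :=
  antitone_nat_of_succ_le fun k => by
    simpa only [comp_proj_succ] using ker_le_ker_comp (proj ν (k + 1)) (ν k)

/-- `M̂` is complete for the filtration by the kernels of the projections. -/
theorem exists_proj_eq_of_sub_mem_ker (X : ℕ → adicLimit ν)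
    (hX : ∀ k, X (k + 1) - X k ∈ ker (proj ν k)) : ∃ Y, ∀ k, proj ν k Y = proj ν k (X k) := by
  refine ⟨⟨fun k => (X k : ∀ n, M n) k, fun k => ?_⟩, fun k => rfl⟩
  have h := hX k
  rw [mem_ker, map_sub, sub_eq_zero] at h
  exact ((X (k + 1)).2 k).trans h

theorem proj_surjective (hsurj : ∀ k, Function.Surjective (ν k)) (k : ℕ) :
    Function.Surjective (proj ν k) := by
  induction k generalizing M with
  | zero =>
    intro x
    exact ⟨⟨fun n => Nat.rec (motive := M) x (fun n y => Function.surjInv (hsurj n) y) n,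
      fun n => Function.surjInv_eq (hsurj n) _⟩, rfl⟩
  | succ k ih =>
    -- lift in the shifted system `M (n + 1)`, then prepend the image in `M 0`
    intro x
    obtain ⟨f, rfl⟩ :=
      ih (M := fun n => M (n + 1)) (ν := fun n => ν (n + 1)) (fun n => hsurj (n + 1)) x
    refine ⟨⟨fun n => Nat.casesOn (motive := M) n (ν 0 ((f : ∀ n, M (n + 1)) 0)) f, ?_⟩, rfl⟩
    rintro (_ | n)
    exacts [rfl, f.2 n]

variable {a : Ideal A}

theorem pow_smul_top_le_ker_proj (hann : ∀ k (x : M k), ∀ r ∈ a ^ (k + 1), r • x = 0) (k : ℕ) :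
    a ^ (k + 1) • (⊤ : Submodule A (adicLimit ν)) ≤ ker (proj ν k) :=
  smul_le.2 fun r hr f _ => by simpa using hann k _ r hr

theorem ker_proj_eq_pow_smul_top_sup (hsurj : ∀ k, Function.Surjective (ν k))
    (hker : ∀ k, ker (ν k) = a ^ (k + 1) • (⊤ : Submodule A (M (k + 1)))) (k : ℕ) :
    ker (proj ν k) = a ^ (k + 1) • ⊤ ⊔ ker (proj ν (k + 1)) := by
  rw [← comap_map_eq, map_smul'', Submodule.map_top, range_eq_top.2 (proj_surjective hsurj _),
    ← hker, ← ker_comp, comp_proj_succ]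

theorem exists_sum_smul_sub_mem_ker_proj (hsurj : ∀ k, Function.Surjective (ν k))
    (hker : ∀ k, ker (ν k) = a ^ (k + 1) • (⊤ : Submodule A (M (k + 1)))) {k n : ℕ}
    {s : Fin n → A} (hs : Ideal.span (Set.range s) = a ^ (k + 1)) (j : ℕ) {x : adicLimit ν}
    (hx : x ∈ ker (proj ν (k + j))) :
    ∃ z : Fin n → adicLimit ν, (∀ i, z i ∈ a ^ j • (⊤ : Submodule A (adicLimit ν))) ∧
      x - ∑ i, s i • z i ∈ ker (proj ν (k + j + 1)) := by
  rw [ker_proj_eq_pow_smul_top_sup hsurj hker, mem_sup] at hx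
  obtain ⟨u, hu, v, hv, rfl⟩ := hx
  rw [show k + j + 1 = k + 1 + j by omega, pow_add, ← smul_eq_mul, smul_assoc, ← hs] at hu
  obtain ⟨z, hz, rfl⟩ := exists_sum_smul_eq_of_mem_span_range_smul s _ hu
  exact ⟨z, hz, by simpa using hv⟩

theorem ker_proj_le_pow_smul_top (ha : a.FG)
    (hann : ∀ k (x : M k), ∀ r ∈ a ^ (k + 1), r • x = 0)
    (hsurj : ∀ k, Function.Surjective (ν k))
    (hker : ∀ k, ker (ν k) = a ^ (k + 1) • (⊤ : Submodule A (M (k + 1)))) (k : ℕ) :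
    ker (proj ν k) ≤ a ^ (k + 1) • ⊤ := by
  intro f hf
  obtain ⟨n, s, hs⟩ := fg_iff_exists_fin_generating_family.1 (Submodule.FG.pow ha (k + 1))
  choose z hz hz_ker using fun j (c : {c : Fin n → adicLimit ν //
      f - ∑ i, s i • c i ∈ ker (proj ν (k + j))}) =>
    exists_sum_smul_sub_mem_ker_proj hsurj hker hs j c.2
  let c : ∀ j, {c : Fin n → adicLimit ν // f - ∑ i, s i • c i ∈ ker (proj ν (k + j))} :=
    fun j => Nat.rec ⟨0, by simpa using hf⟩
      (fun j c => ⟨c.1 + z j c, show _ ∈ ker (proj ν (k + j + 1)) by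
        simpa [smul_add, Finset.sum_add_distrib, sub_sub] using hz_ker j c⟩) j
  choose Y hY using fun i => exists_proj_eq_of_sub_mem_ker (fun p => (c (p + 1)).1 i)
    fun p => pow_smul_top_le_ker_proj hann p (by simpa [c] using hz (p + 1) (c (p + 1)) i)
  have hfY : f = ∑ i, s i • Y i := ext_proj fun p => by
    have h := antitone_ker_proj (by omega : p ≤ k + (p + 1)) (c (p + 1)).2
    rw [mem_ker, map_sub, sub_eq_zero] at h
    simp only [h, map_sum, map_smul, hY]
  rw [hfY, ← hs]
  exact sum_mem fun i _ => smul_mem_smul (subset_span ⟨i, rfl⟩) mem_top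

end adicLimit

/-- Every `𝔞`-adic system `{M_k}` (for `𝔞` finitely generated) is induced by a module:
it is isomorphic, as an inverse system, to the system `{A/𝔞^{k+1} ⊗_A M̂} = {M̂/𝔞^{k+1}M̂}`
induced by its limit `M̂`, via the canonical maps coming from the projections `M̂ → M_k`. -/
theorem adic_system_induced_by_limit {A : Type*} [CommRing A]
    (a : Ideal A) (ha : a.FG)
    (M : ℕ → Type*) [∀ k, AddCommGroup (M k)] [∀ k, Module A (M k)]
    (hann : ∀ k (x : M k), ∀ r ∈ a ^ (k + 1), r • x = 0)
    (ν : ∀ k, M (k + 1) →ₗ[A] M k)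
    (hsurj : ∀ k, Function.Surjective (ν k))
    (hker : ∀ k, LinearMap.ker (ν k) = (a ^ (k + 1)) • (⊤ : Submodule A (M (k + 1)))) :
    ∃ e : ∀ k, ((↥(adicLimit ν)) ⧸
        ((a ^ (k + 1)) • (⊤ : Submodule A (↥(adicLimit ν))))) ≃ₗ[A] M k,
      ∀ (k : ℕ) (f : ↥(adicLimit ν)),
        e k (Submodule.Quotient.mk f) = (f : ∀ n, M n) k := by
  have ker_proj : ∀ k, ker (adicLimit.proj ν k) = a ^ (k + 1) • ⊤ := fun k =>
    (adicLimit.ker_proj_le_pow_smul_top ha hann hsurj hker k).antisymm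
      (adicLimit.pow_smul_top_le_ker_proj hann k)
  exact ⟨fun k => (quotEquivOfEq _ _ (ker_proj k).symm).trans
    ((adicLimit.proj ν k).quotKerEquivOfSurjective (adicLimit.proj_surjective hsurj k)),
    fun k f => rfl⟩
end

section
/- Let A be a commutative ring, 𝔞 an ideal, and M an A-module. If Tor_i^A(A/𝔞^{k+1}, M) = 0 for all i > 0 and all k ≥ 0, and A/𝔞^{k+1} ⊗_A M is flat over A/𝔞^{k+1} for all k, then Tor_i^A(N, M) = 0 for every i > 0 and every 𝔞-torsion A-module N. -/
/-!
Compute `Tor` with a projective resolution `P` of `M`, so that `Tor_{j+1}(N, M) = 0` says that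
`N ⊗ P` is exact in degree `j + 1`. Such exactness is inherited from the finitely generated
submodules of `N`, and a finitely generated `𝔞`-torsion module is killed by one power `𝔞^{k+1}`,
i.e. it is a module over `B = A/𝔞^{k+1}`. For a `B`-module `N`, shift dimension along
`0 → K → B^{(N)} → N → 0`: `B^{(N)}`, a sum of copies of `B`, has no higher `Tor`, and
`K ⊗_A M → B^{(N)} ⊗_A M` is injective since it is `K ⊗_B (B ⊗_A M) → B^{(N)} ⊗_B (B ⊗_A M)`
with `B ⊗_A M` flat over `B`. As `K` is again a `B`-module, induction on the degree concludes.
-/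

open CategoryTheory

open scoped TensorProduct

open LinearMap hiding id
open TensorProduct

universe u

section TensorExactness

variable {R : Type*} [CommRing R] {X Y Z : Type*}
  [AddCommGroup X] [Module R X] [AddCommGroup Y] [Module R Y] [AddCommGroup Z] [Module R Z]

lemma rTensor_lTensor_comm {M P : Type*} [AddCommGroup M] [Module R M] [AddCommGroup P]
    [Module R P] (f : M →ₗ[R] P) (g : X →ₗ[R] Y) (x : M ⊗[R] X) :
    rTensor Y f (lTensor M g x) = lTensor P g (rTensor X f x) := by
  rw [← LinearMap.comp_apply, rTensor_comp_lTensor, ← lTensor_comp_rTensor, LinearMap.comp_apply]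

lemma Function.Exact.finsuppMapRange {f : X →ₗ[R] Y} {g : Y →ₗ[R] Z} (h : Function.Exact f g)
    (ι : Type*) :
    Function.Exact (Finsupp.mapRange.linearMap f : (ι →₀ X) →ₗ[R] ι →₀ Y)
      (Finsupp.mapRange.linearMap g) := by
  intro x
  constructor
  · intro hx
    have hxs (s : ι) : x s ∈ range f := (h _).1 (by simpa using DFunLike.congr_fun hx s)
    rw [← x.sum_single]
    refine Submodule.sum_mem (range (Finsupp.mapRange.linearMap f)) fun s _ => ?_
    obtain ⟨y, hy⟩ := hxs s
    exact ⟨Finsupp.single s y, by simp [hy]⟩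
  · rintro ⟨y, rfl⟩
    ext s
    simp [h.apply_apply_eq_zero]

lemma mapRange_lTensor_comp_finsuppLeft (B : Type*) [AddCommGroup B] [Module R B] (ι : Type*)
    [DecidableEq ι] (f : X →ₗ[R] Y) :
    Finsupp.mapRange.linearMap (lTensor B f) ∘ₗ (finsuppLeft R R B X ι).toLinearMap =
      (finsuppLeft R R B Y ι).toLinearMap ∘ₗ lTensor (ι →₀ B) f := by
  ext s b x t
  simp

lemma Function.Exact.lTensor_finsupp {f : X →ₗ[R] Y} {g : Y →ₗ[R] Z} (B : Type*)
    [AddCommGroup B] [Module R B] (ι : Type*)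
    (h : Function.Exact (lTensor B f) (lTensor B g)) :
    Function.Exact (lTensor (ι →₀ B) f) (lTensor (ι →₀ B) g) := by
  classical
  exact (Function.Exact.iff_of_ladder_linearEquiv (mapRange_lTensor_comp_finsuppLeft B ι f)
    (mapRange_lTensor_comp_finsuppLeft B ι g)).1 (h.finsuppMapRange ι)

lemma exact_lTensor_of_forall_fg {N : Type*} [AddCommGroup N] [Module R N]
    {f : X →ₗ[R] Y} {g : Y →ₗ[R] Z}
    (h : ∀ Q : Submodule R N, Q.FG → Function.Exact (lTensor Q f) (lTensor Q g)) :
    Function.Exact (lTensor N f) (lTensor N g) := by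
  intro x
  obtain ⟨J, hJ, y, rfl⟩ := Submodule.exists_fg_le_eq_rTensor_subtype x
  constructor
  · intro hx
    rw [← rTensor_lTensor_comm] at hx
    obtain ⟨Q, hJQ, hQ, hy⟩ := TensorProduct.eq_zero_of_fg_of_subtype_eq_zero hJ hx
    rw [rTensor_lTensor_comm] at hy
    obtain ⟨z, hz⟩ := ((h Q hQ) _).1 hy
    refine ⟨rTensor X Q.subtype z, ?_⟩
    rw [← rTensor_lTensor_comm, hz, ← rTensor_comp_apply, Submodule.subtype_comp_inclusion]
  · rintro ⟨z, hz⟩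
    obtain ⟨Q, hQ, w, rfl⟩ := Submodule.exists_fg_le_eq_rTensor_subtype z
    rw [← hz, ← rTensor_lTensor_comm, ← rTensor_lTensor_comm, (h Q hQ).apply_apply_eq_zero,
      map_zero]

lemma exact_lTensor_of_shortExact {W K F N : Type*} [AddCommGroup W] [Module R W]
    [AddCommGroup K] [Module R K] [AddCommGroup F] [Module R F] [AddCommGroup N] [Module R N]
    {d₂ : W →ₗ[R] X} {d₁ : X →ₗ[R] Y} {d₀ : Y →ₗ[R] Z}
    (hd : d₀ ∘ₗ d₁ = 0) {ι : K →ₗ[R] F} {p : F →ₗ[R] N} (hιp : Function.Exact ι p)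
    (hp : Function.Surjective p) (hF : Function.Exact (lTensor F d₂) (lTensor F d₁))
    (hK : Function.Exact (lTensor K d₁) (lTensor K d₀))
    (hι : Function.Injective (rTensor Z ι)) :
    Function.Exact (lTensor N d₂) (lTensor N d₁) := by
  intro x
  obtain ⟨y, rfl⟩ := rTensor_surjective X hp x
  constructor
  · intro hx
    rw [← rTensor_lTensor_comm] at hx
    obtain ⟨z, hz⟩ := (rTensor_exact Y hιp hp _).1 hx
    have hz₀ : lTensor K d₀ z = 0 := by
      apply hι
      rw [rTensor_lTensor_comm, hz, ← lTensor_comp_apply, hd, lTensor_zero, LinearMap.zero_apply,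
        map_zero]
    obtain ⟨w, hw⟩ := (hK z).1 hz₀
    obtain ⟨u, hu⟩ := (hF (y - rTensor X ι w)).1 (by
      rw [map_sub, ← rTensor_lTensor_comm, hw, hz, sub_self])
    refine ⟨rTensor W p u, ?_⟩
    rw [← rTensor_lTensor_comm, hu, map_sub, ← rTensor_comp_apply, hιp.linearMap_comp_eq_zero,
      rTensor_zero, LinearMap.zero_apply, sub_zero]
  · rintro ⟨u, hu⟩
    obtain ⟨v, rfl⟩ := rTensor_surjective W hp u
    rw [← hu, ← rTensor_lTensor_comm, ← rTensor_lTensor_comm, hF.apply_apply_eq_zero, map_zero]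

end TensorExactness

section BaseChange

variable {A : Type*} [CommRing A] {B : Type*} [CommRing B] [Algebra A B]
  (M : Type*) [AddCommGroup M] [Module A M]

lemma rTensor_comp_cancelBaseChange {K F : Type*} [AddCommMonoid K] [Module A K] [Module B K]
    [IsScalarTower A B K] [AddCommMonoid F] [Module A F] [Module B F] [IsScalarTower A B F]
    (f : K →ₗ[B] F) :
    AlgebraTensorModule.rTensor A M f ∘ₗ
        (AlgebraTensorModule.cancelBaseChange A B B K M).toLinearMap =
      (AlgebraTensorModule.cancelBaseChange A B B F M).toLinearMap ∘ₗ rTensor (B ⊗[A] M) f := by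
  ext k m
  simp

lemma injective_rTensor_of_flat_baseChange [Module.Flat B (B ⊗[A] M)] {K F : Type*}
    [AddCommMonoid K] [Module A K] [Module B K] [IsScalarTower A B K]
    [AddCommMonoid F] [Module A F] [Module B F] [IsScalarTower A B F]
    {f : K →ₗ[B] F} (hf : Function.Injective f) :
    Function.Injective (rTensor M (f.restrictScalars A)) := by
  have hB := Module.Flat.rTensor_preserves_injective_linearMap (M := B ⊗[A] M) f hf
  rw [← EquivLike.injective_comp (AlgebraTensorModule.cancelBaseChange A B B K M)]
  change Function.Injective (AlgebraTensorModule.rTensor A M f ∘ₗ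
    (AlgebraTensorModule.cancelBaseChange A B B K M).toLinearMap)
  rw [rTensor_comp_cancelBaseChange]
  exact (AlgebraTensorModule.cancelBaseChange A B B F M).injective.comp hB

lemma exact_lTensor_of_exact_lTensor_ker_linearCombination {W X Y Z : Type*}
    [AddCommGroup W] [Module A W] [AddCommGroup X] [Module A X] [AddCommGroup Y] [Module A Y]
    [AddCommGroup Z] [Module A Z] {d₂ : W →ₗ[A] X} {d₁ : X →ₗ[A] Y} {d₀ : Y →ₗ[A] Z}
    (hd : d₀ ∘ₗ d₁ = 0) (N : Type*) [AddCommGroup N] [Module A N] [Module B N]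
    [IsScalarTower A B N] (hB : Function.Exact (lTensor B d₂) (lTensor B d₁))
    (hK : Function.Exact (lTensor (ker (Finsupp.linearCombination B (id : N → N))) d₁)
      (lTensor (ker (Finsupp.linearCombination B (id : N → N))) d₀))
    (hι : Function.Injective
      (rTensor Z ((ker (Finsupp.linearCombination B (id : N → N))).subtype.restrictScalars A))) :
    Function.Exact (lTensor N d₂) (lTensor N d₁) :=
  exact_lTensor_of_shortExact hd (p := (Finsupp.linearCombination B id).restrictScalars A)
    (exact_subtype_ker_map _)
    (Finsupp.linearCombination_id_surjective B N) (hB.lTensor_finsupp B N) hK hι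

end BaseChange

lemma ModuleCat.hom_d_comp_hom_d {R : Type*} [Ring R] {ι : Type*} {c : ComplexShape ι}
    (C : HomologicalComplex (ModuleCat R) c) (i j k : ι) :
    (C.d j k).hom ∘ₗ (C.d i j).hom = 0 := by
  rw [← ModuleCat.hom_comp, C.d_comp_d]
  rfl

section Resolution

variable {A : Type u} [CommRing A] {M : Type u} [AddCommGroup M] [Module A M]
  (P : ProjectiveResolution (ModuleCat.of A M))

lemma subsingleton_tor_succ_iff (N : Type u) [AddCommGroup N] [Module A N] (j : ℕ) :
    Subsingleton (((Tor (ModuleCat.{u} A) (j + 1)).obj (ModuleCat.of A N)).obj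
        (ModuleCat.of A M)) ↔
      Function.Exact (lTensor N (P.complex.d (j + 2) (j + 1)).hom)
        (lTensor N (P.complex.d (j + 1) j).hom) := by
  rw [← ModuleCat.isZero_iff_subsingleton, Tor_obj, (P.isoLeftDerivedObj _ (j + 1)).isZero_iff,
    HomologicalComplex.homologyFunctor_obj, ← HomologicalComplex.exactAt_iff_isZero_homology,
    HomologicalComplex.exactAt_iff' _ (j + 2) (j + 1) j (by simp) (by simp),
    ShortComplex.moduleCat_exact_iff_range_eq_ker, LinearMap.exact_iff, eq_comm]
  rfl

lemma CategoryTheory.ProjectiveResolution.exact_d_one_zero_π :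
    Function.Exact (P.complex.d 1 0).hom ((P.π.f 0).hom : P.complex.X 0 →ₗ[A] M) :=
  LinearMap.exact_iff.2 ((ShortComplex.moduleCat_exact_iff_range_eq_ker _).1 P.exact₀).symm

lemma CategoryTheory.ProjectiveResolution.surjective_π_f_zero :
    Function.Surjective ((P.π.f 0).hom : P.complex.X 0 →ₗ[A] M) :=
  (ModuleCat.epi_iff_surjective _).1 inferInstance

variable {B : Type u} [CommRing B] [Algebra A B]

lemma exact_lTensor_resolution_of_module [Module.Flat B (B ⊗[A] M)]
    (hB : ∀ j, Function.Exact (lTensor B (P.complex.d (j + 2) (j + 1)).hom)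
      (lTensor B (P.complex.d (j + 1) j).hom))
    (j : ℕ) (N : Type u) [AddCommGroup N] [Module A N] [Module B N] [IsScalarTower A B N] :
    Function.Exact (lTensor N (P.complex.d (j + 2) (j + 1)).hom)
      (lTensor N (P.complex.d (j + 1) j).hom) := by
  induction j generalizing N with
  | zero =>
    have hd : ((P.π.f 0).hom : P.complex.X 0 →ₗ[A] M) ∘ₗ (P.complex.d 1 0).hom = 0 := by
      rw [← ModuleCat.hom_comp, P.complex_d_comp_π_f_zero]
      rfl
    let K := ker (Finsupp.linearCombination B (id : N → N))
    exact exact_lTensor_of_exact_lTensor_ker_linearCombination hd N (hB 0)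
      (lTensor_exact K P.exact_d_one_zero_π P.surjective_π_f_zero)
      (injective_rTensor_of_flat_baseChange (A := A) M K.injective_subtype)
  | succ j ih =>
    let K := ker (Finsupp.linearCombination B (id : N → N))
    exact exact_lTensor_of_exact_lTensor_ker_linearCombination
      (ModuleCat.hom_d_comp_hom_d P.complex (j + 2) (j + 1) j) N (hB (j + 1)) (ih K)
      (Module.Flat.rTensor_preserves_injective_linearMap _ K.injective_subtype)

end Resolution

lemma Submodule.FG.exists_isTorsionBySet_pow {A N : Type*} [CommRing A] [AddCommGroup N]
    [Module A N] {a : Ideal A} (hN : ∀ n : N, ∃ m : ℕ, ∀ r ∈ a ^ m, r • n = 0)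
    {Q : Submodule A N} (hQ : Q.FG) :
    ∃ m : ℕ, Module.IsTorsionBySet A Q (a ^ m : Ideal A) := by
  choose m hm using hN
  obtain ⟨s, rfl⟩ := hQ
  refine ⟨s.sup m, fun x r => Subtype.ext ?_⟩
  have hle : span A (s : Set N) ≤ torsionBySet A N (a ^ s.sup m : Ideal A) :=
    span_le.2 fun n hn => (mem_torsionBySet_iff _ _).2 fun r =>
      hm n r (Ideal.pow_le_pow_right (Finset.le_sup hn) r.2)
  exact (mem_torsionBySet_iff _ _).1 (hle x.2) r

/-- If `Tor_i^A(A/𝔞^{k+1}, M) = 0` for all `i > 0` and `k ≥ 0`, and each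
`A/𝔞^{k+1} ⊗_A M` is flat over `A/𝔞^{k+1}`, then `Tor_i^A(N, M) = 0` for every `i > 0`
and every `𝔞`-torsion module `N`. -/
theorem tor_vanishing_of_quotients_flat {A : Type u} [CommRing A] (a : Ideal A)
    (M : Type u) [AddCommGroup M] [Module A M]
    (htor : ∀ i > 0, ∀ k : ℕ,
      Subsingleton (((Tor (ModuleCat.{u} A) i).obj
        (ModuleCat.of A (A ⧸ a ^ (k + 1)))).obj (ModuleCat.of A M)))
    (hflat : ∀ k : ℕ, Module.Flat (A ⧸ a ^ (k + 1)) ((A ⧸ a ^ (k + 1)) ⊗[A] M)) :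
    ∀ i > 0, ∀ (N : Type u) [AddCommGroup N] [Module A N],
      (∀ n : N, ∃ m : ℕ, ∀ r ∈ a ^ m, r • n = 0) →
      Subsingleton (((Tor (ModuleCat.{u} A) i).obj
        (ModuleCat.of A N)).obj (ModuleCat.of A M)) := by
  intro i hi N _ _ hN
  obtain ⟨j, rfl⟩ : ∃ j, i = j + 1 := ⟨i - 1, by omega⟩
  let P : ProjectiveResolution (ModuleCat.of A M) := HasProjectiveResolution.out.some
  rw [subsingleton_tor_succ_iff P]
  refine exact_lTensor_of_forall_fg fun Q hQ => ?_
  obtain ⟨m, hm⟩ := hQ.exists_isTorsionBySet_pow hN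
  have hk : Module.IsTorsionBySet A Q (a ^ (m + 1) : Ideal A) :=
    Module.isTorsionBySet_of_subset (Ideal.pow_le_pow_right m.le_succ) hm
  let := hk.module
  exact exact_lTensor_resolution_of_module P (B := A ⧸ a ^ (m + 1))
    (fun j => (subsingleton_tor_succ_iff P _ j).1 (htor (j + 1) j.succ_pos m)) j Q
end

section
/- Let B be a commutative ring with a nilpotent ideal 𝔟, set B̄ := B/𝔟, and let M be a B-module with Tor_i^B(B̄, M) = 0 for all i > 0. Given a free resolution ⋯ → P̄^{-1} → P̄^0 → B̄ ⊗_B M → 0 of the B̄-module B̄ ⊗_B M, with each P̄^{-i} a free B̄-module on a basis set Z_i, there exists a free resolution ⋯ → P^{-1} → P^0 → M → 0 of M by free B-modules with bases Z_i, such that applying B̄ ⊗_B − to it recovers the given resolution. -/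
/-!
The resolution is lifted one term at a time. At each stage there is a `B`-module `N` (first `M`,
then the successive kernels) with `Tor_i^B(B̄, N) = 0` for `i > 0`, and a `B`-linear map
`r : N → V` with kernel `𝔟N` whose image is the image `W` of the next given `B̄`-linear map, so
that `r` identifies `B̄ ⊗_B N` with `W`. Lifting along `r` the images of the basis vectors gives
a map from the next free `B`-module `P` onto `N`: it is surjective by Nakayama's lemma, which
holds for all modules since `𝔟` is nilpotent. Its kernel `K` again has vanishing higher `Tor` by
dimension shifting, and `Tor_1^B(B̄, N) = 0` gives `K ∩ 𝔟P = 𝔟K`, so reduction modulo `𝔟`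
identifies `B̄ ⊗_B K` with the kernel of the given map, which is the image of the next one.
-/

open CategoryTheory LinearMap

open scoped TensorProduct

universe u

theorem Submodule.le_of_le_sup_smul_of_isNilpotent {B M : Type*} [CommRing B] [AddCommGroup M]
    [Module B M] (b : Ideal B) (hb : IsNilpotent b) {N P : Submodule B M} (h : P ≤ N ⊔ b • P) :
    P ≤ N := by
  obtain ⟨n, hn⟩ := hb
  have key : ∀ k : ℕ, P ≤ N ⊔ b ^ k • P := by
    intro k
    induction k with
    | zero => simp
    | succ k ih =>
      calc P ≤ N ⊔ b • P := h
        _ ≤ N ⊔ b • (N ⊔ b ^ k • P) := sup_le_sup_left (smul_mono_right b ih) N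
        _ ≤ N ⊔ b ^ (k + 1) • P := by
          rw [Submodule.smul_sup, pow_succ', ← Submodule.smul_assoc, ← sup_assoc,
            Ideal.smul_eq_mul]
          exact sup_le_sup_right (sup_le le_rfl Submodule.smul_le_right) _
  simpa [hn] using key n

section Reduction

variable {B : Type u} [CommRing B] (b : Ideal B) (M : Type*) [AddCommGroup M] [Module B M]

theorem ker_mk_one_quotient : ker (TensorProduct.mk B (B ⧸ b) M 1) = b • ⊤ := by
  rw [← LinearEquiv.ker_comp (TensorProduct.quotTensorEquivQuotSMul M b),
    TensorProduct.quotTensorEquivQuotSMul_comp_mk, Submodule.ker_mkQ]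

theorem mk_one_quotient_surjective : Function.Surjective (TensorProduct.mk B (B ⧸ b) M 1) := by
  rw [← TensorProduct.quotTensorEquivQuotSMul_symm_comp_mkQ, coe_comp]
  exact (LinearEquiv.surjective _).comp (Submodule.mkQ_surjective _)

noncomputable abbrev reduceMod (Z : Type*) : (Z →₀ B) →ₗ[B] (Z →₀ B ⧸ b) :=
  Finsupp.mapRange.linearMap b.mkQ

theorem reduceMod_surjective (Z : Type*) : Function.Surjective (reduceMod b Z) :=
  Finsupp.mapRange_surjective _ (map_zero _) b.mkQ_surjective

theorem ker_reduceMod (Z : Type*) : ker (reduceMod b Z) = b • ⊤ := by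
  rw [Finsupp.ker_mapRange, Submodule.ker_mkQ, ← Finsupp.submodule_top,
    ← Finsupp.submodule_smul]
  simp

end Reduction

structure FreeResolution (B : Type u) [CommRing B] (N : Type u) [AddCommGroup N]
    [Module B N] where
  ι : ℕ → Type u
  d : ∀ n, (ι (n + 1) →₀ B) →ₗ[B] (ι n →₀ B)
  e : (ι 0 →₀ B) →ₗ[B] N
  surjective : Function.Surjective e
  exact_zero : ker e = range (d 0)
  exact : ∀ n, ker (d n) = range (d (n + 1))

def IsTorAcyclic (B : Type u) [CommRing B] (A N : Type u) [AddCommGroup A] [Module B A]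
    [AddCommGroup N] [Module B N] : Prop :=
  ∀ i > 0, Subsingleton (((Tor (ModuleCat.{u} B) i).obj (ModuleCat.of B A)).obj
    (ModuleCat.of B N))

theorem LinearMap.range_subtype_comp_of_surjective {R M N : Type*} [Ring R] [AddCommGroup M]
    [Module R M] [AddCommGroup N] [Module R N] {S : Submodule R N} {f : M →ₗ[R] S}
    (hf : Function.Surjective f) : range (S.subtype ∘ₗ f) = S := by
  rw [range_comp_of_range_eq_top _ (range_eq_top.2 hf), Submodule.range_subtype]

namespace FreeResolution

variable {B : Type u} [CommRing B] {N : Type u} [AddCommGroup N] [Module B N]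
  (R : FreeResolution B N)

noncomputable def complex : ChainComplex (ModuleCat.{u} B) ℕ :=
  ChainComplex.of (fun n => ModuleCat.of B (R.ι n →₀ B)) (fun n => ModuleCat.ofHom (R.d n))
    fun n => ModuleCat.hom_ext (range_le_ker_iff.1 (R.exact n).ge)

theorem complex_d (n : ℕ) : R.complex.d (n + 1) n = ModuleCat.ofHom (R.d n) :=
  ChainComplex.of_d (fun n => ModuleCat.of B (R.ι n →₀ B)) (fun n => ModuleCat.ofHom (R.d n)) n

noncomputable def π :
    R.complex ⟶ (ChainComplex.single₀ (ModuleCat.{u} B)).obj (ModuleCat.of B N) :=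
  (ChainComplex.toSingle₀Equiv _ _).symm ⟨ModuleCat.ofHom R.e, by
    rw [complex_d]; exact ModuleCat.hom_ext (range_le_ker_iff.1 R.exact_zero.ge)⟩

theorem π_f_zero : R.π.f 0 = ModuleCat.ofHom R.e :=
  ChainComplex.toSingle₀Equiv_symm_apply_f_zero _ _

noncomputable def toProjectiveResolution : ProjectiveResolution (ModuleCat.of B N) where
  complex := R.complex
  projective n :=
    ModuleCat.projective_of_free (M := ModuleCat.of B (R.ι n →₀ B)) Finsupp.basisSingleOne
  π := R.π
  quasiIso := ⟨fun n => by
    cases n with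
    | zero =>
      rw [ChainComplex.quasiIsoAt₀_iff, ShortComplex.quasiIso_iff_of_zeros' _ rfl rfl rfl]
      constructor
      · rw [ShortComplex.moduleCat_exact_iff_range_eq_ker]
        change range (R.complex.d 1 0).hom = ker (R.π.f 0).hom
        rw [complex_d, π_f_zero]
        exact R.exact_zero.symm
      · change Epi (R.π.f 0)
        rw [π_f_zero]
        exact (ModuleCat.epi_iff_surjective _).2 R.surjective
    | succ n =>
      rw [quasiIsoAt_iff_exactAt' _ (n + 1) (ChainComplex.exactAt_succ_single_obj _ _),
        HomologicalComplex.exactAt_iff' _ (n + 2) (n + 1) n (by simp) (by simp),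
        ShortComplex.moduleCat_exact_iff_range_eq_ker]
      change range (R.complex.d (n + 2) (n + 1)).hom = ker (R.complex.d (n + 1) n).hom
      rw [complex_d, complex_d]
      exact (R.exact n).symm⟩

theorem tor_succ_subsingleton_iff (A : Type u) [AddCommGroup A] [Module B A] (m : ℕ) :
    Subsingleton (((Tor (ModuleCat.{u} B) (m + 1)).obj (ModuleCat.of B A)).obj
      (ModuleCat.of B N)) ↔ ker ((R.d m).lTensor A) = range ((R.d (m + 1)).lTensor A) := by
  let F := (MonoidalCategory.tensoringLeft (ModuleCat.{u} B)).obj (ModuleCat.of B A)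
  rw [← ModuleCat.isZero_iff_subsingleton, Tor_obj,
    (R.toProjectiveResolution.isoLeftDerivedObj F (m + 1)).isZero_iff,
    HomologicalComplex.homologyFunctor_obj,
    ← HomologicalComplex.exactAt_iff_isZero_homology,
    HomologicalComplex.exactAt_iff' _ (m + 2) (m + 1) m (by simp) (by simp),
    ShortComplex.moduleCat_exact_iff_range_eq_ker, eq_comm]
  change ker (F.map (R.complex.d (m + 1) m)).hom =
    range (F.map (R.complex.d (m + 2) (m + 1))).hom ↔ _
  rw [complex_d, complex_d]
  rfl

variable {ι₀ : Type u} {p : (ι₀ →₀ B) →ₗ[B] N}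

noncomputable def cons (S : FreeResolution B (ker p)) (hp : Function.Surjective p) :
    FreeResolution B N where
  ι | 0 => ι₀ | n + 1 => S.ι n
  d | 0 => (ker p).subtype ∘ₗ S.e | n + 1 => S.d n
  e := p
  surjective := hp
  exact_zero := (range_subtype_comp_of_surjective S.surjective).symm
  exact
    | 0 => (ker_comp_of_ker_eq_bot _ (ker p).ker_subtype).trans S.exact_zero
    | n + 1 => S.exact n

end FreeResolution

section Syzygy

variable {B : Type u} [CommRing B]

noncomputable def syzygy (K : ModuleCat.{u} B) : ℕ → ModuleCat.{u} B
  | 0 => K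
  | n + 1 =>
    ModuleCat.of B (ker (Finsupp.linearCombination B (_root_.id : syzygy K n → syzygy K n)))

noncomputable def FreeResolution.ofSyzygies (K : Type u) [AddCommGroup K] [Module B K] :
    FreeResolution B K where
  ι n := syzygy (ModuleCat.of B K) n
  d _ := (ker (Finsupp.linearCombination B _root_.id)).subtype ∘ₗ
    Finsupp.linearCombination B _root_.id
  e := Finsupp.linearCombination B _root_.id
  surjective := Finsupp.linearCombination_surjective B Function.surjective_id
  exact_zero := (range_subtype_comp_of_surjective
    (Finsupp.linearCombination_surjective B Function.surjective_id)).symm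
  exact _ := (ker_comp_of_ker_eq_bot _ (Submodule.ker_subtype _)).trans
    (range_subtype_comp_of_surjective
      (Finsupp.linearCombination_surjective B Function.surjective_id)).symm

end Syzygy


section DimensionShifting

variable {B : Type u} [CommRing B] {N : Type u} [AddCommGroup N] [Module B N]
  {ι : Type u} {p : (ι →₀ B) →ₗ[B] N}

theorem IsTorAcyclic.ker_of_surjective (A : Type u) [AddCommGroup A] [Module B A]
    (hp : Function.Surjective p) (hN : IsTorAcyclic B A N) : IsTorAcyclic B A (ker p) := by
  intro i hi
  obtain ⟨m, rfl⟩ := Nat.exists_eq_add_of_lt hi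
  let S := FreeResolution.ofSyzygies (B := B) (ker p)
  rw [zero_add, S.tor_succ_subsingleton_iff]
  exact ((S.cons hp).tor_succ_subsingleton_iff A (m + 1)).1 (hN (m + 2) (by omega))

theorem range_inf_smul_top_le_of_exact_lTensor (b : Ideal B) {X Y W : Type u}
    [AddCommGroup X] [Module B X] [AddCommGroup Y] [Module B Y] [AddCommGroup W] [Module B W]
    (f : Y →ₗ[B] X) (g : W →ₗ[B] Y) (hfg : f ∘ₗ g = 0)
    (hT : ker (f.lTensor (B ⧸ b)) ≤ range (g.lTensor (B ⧸ b))) :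
    range f ⊓ (b • ⊤ : Submodule B X) ≤ b • range f := by
  rintro _ ⟨⟨y, rfl⟩, hy⟩
  rw [SetLike.mem_coe, ← ker_mk_one_quotient, mem_ker] at hy
  obtain ⟨t, ht⟩ := hT (x := 1 ⊗ₜ y) hy
  obtain ⟨w, rfl⟩ := mk_one_quotient_surjective b W t
  have hyw : y - g w ∈ b • (⊤ : Submodule B Y) := by
    rw [TensorProduct.mk_apply, lTensor_tmul] at ht
    rw [← ker_mk_one_quotient, mem_ker, map_sub, TensorProduct.mk_apply, TensorProduct.mk_apply,
      ht, sub_self]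
  have hfy : f y = f (y - g w) := by
    rw [map_sub, ← LinearMap.comp_apply, hfg, LinearMap.zero_apply, sub_zero]
  rw [hfy, ← Submodule.map_top, ← Submodule.map_smul'']
  exact Submodule.mem_map_of_mem hyw

theorem ker_inf_smul_top_le_of_tor_one (b : Ideal B) (hp : Function.Surjective p)
    (hN : Subsingleton (((Tor (ModuleCat.{u} B) 1).obj (ModuleCat.of B (B ⧸ b))).obj
      (ModuleCat.of B N))) :
    ker p ⊓ b • ⊤ ≤ b • ker p := by
  let R := (FreeResolution.ofSyzygies (B := B) (ker p)).cons hp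
  have h := range_inf_smul_top_le_of_exact_lTensor b (R.d 0) (R.d 1)
    (range_le_ker_iff.1 (R.exact 0).ge) ((R.tor_succ_subsingleton_iff (B ⧸ b) 0).1 hN).le
  rwa [← R.exact_zero] at h

end DimensionShifting

section Lifting

variable {B : Type u} [CommRing B] {b : Ideal B} {N V : Type u} [AddCommGroup N] [Module B N]
  [AddCommGroup V] [Module B V] {Z : Type u}

/-- The reverse inclusion `b • ⊤ ≤ ker r` holds as soon as `V` is a `B ⧸ b`-module, and then `r`
identifies `(B ⧸ b) ⊗[B] N` with `W`. -/
structure IsReductionOnto {N V : Type*} [AddCommMonoid N] [Module B N] [AddCommMonoid V]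
    [Module B V] (b : Ideal B) (r : N →ₗ[B] V) (W : Submodule B V) : Prop where
  ker_le : ker r ≤ b • ⊤
  range_eq : range r = W

theorem exists_surjective_lift (hb : IsNilpotent b) {r : N →ₗ[B] V}
    {φ : (Z →₀ B ⧸ b) →ₗ[B] V} (hr : IsReductionOnto b r (range φ)) :
    ∃ e : (Z →₀ B) →ₗ[B] N, Function.Surjective e ∧ r ∘ₗ e = φ ∘ₗ reduceMod b Z := by
  have hlift (z : Z) : ∃ n, r n = φ (Finsupp.single z 1) := by
    rw [← mem_range, hr.range_eq]
    exact mem_range_self _ _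
  choose m hm using hlift
  let e := Finsupp.linearCombination B m
  have he : r ∘ₗ e = φ ∘ₗ reduceMod b Z :=
    Finsupp.lhom_ext' fun z => ext_ring (by simp [e, hm])
  refine ⟨e, range_eq_top.1 (top_le_iff.1 ?_), he⟩
  refine Submodule.le_of_le_sup_smul_of_isNilpotent b hb fun n _ => ?_
  obtain ⟨v, hv⟩ : r n ∈ range φ := hr.range_eq ▸ mem_range_self r n
  obtain ⟨x, rfl⟩ := reduceMod_surjective b Z v
  have hnx : n - e x ∈ b • ⊤ := hr.ker_le <| by
    rw [mem_ker, map_sub, ← LinearMap.comp_apply, he, LinearMap.comp_apply, hv, sub_self]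
  exact Submodule.mem_sup.2 ⟨e x, mem_range_self e x, n - e x, hnx, add_sub_cancel _ _⟩

theorem map_ker_reduceMod {r : N →ₗ[B] V} (hr : ker r ≤ b • ⊤) {φ : (Z →₀ B ⧸ b) →ₗ[B] V}
    {e : (Z →₀ B) →ₗ[B] N} (he : Function.Surjective e) (hre : r ∘ₗ e = φ ∘ₗ reduceMod b Z) :
    (ker e).map (reduceMod b Z) = ker φ := by
  refine le_antisymm ?_ fun y hy => ?_
  · rintro _ ⟨x, hx, rfl⟩
    rw [mem_ker, ← LinearMap.comp_apply, ← hre, LinearMap.comp_apply, mem_ker.1 hx, map_zero]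
  obtain ⟨x, rfl⟩ := reduceMod_surjective b Z y
  have hex : e x ∈ (b • ⊤ : Submodule B (Z →₀ B)).map e := by
    rw [Submodule.map_smul'', Submodule.map_top, range_eq_top.2 he]
    refine hr ?_
    rw [mem_ker, ← LinearMap.comp_apply, hre, LinearMap.comp_apply, mem_ker.1 hy]
  obtain ⟨w, hw, hwx⟩ := hex
  refine ⟨x - w, by rw [SetLike.mem_coe, mem_ker, map_sub, hwx, sub_self], ?_⟩
  rw [map_sub, (ker_reduceMod b Z).ge hw, sub_zero]

theorem ker_reduceMod_comp_subtype_le {K : Submodule B (Z →₀ B)} (hK : K ⊓ b • ⊤ ≤ b • K) :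
    ker (reduceMod b Z ∘ₗ K.subtype) ≤ b • ⊤ := fun x hx =>
  (Submodule.mem_smul_top_iff b K x).2 (hK ⟨x.2, (ker_reduceMod b Z).le hx⟩)

theorem exists_lift (hb : IsNilpotent b) (hN : IsTorAcyclic B (B ⧸ b) N) {r : N →ₗ[B] V}
    {φ : (Z →₀ B ⧸ b) →ₗ[B] V} (hr : IsReductionOnto b r (range φ)) :
    ∃ e : (Z →₀ B) →ₗ[B] N, Function.Surjective e ∧ r ∘ₗ e = φ ∘ₗ reduceMod b Z ∧
      IsTorAcyclic B (B ⧸ b) (ker e) ∧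
      IsReductionOnto b (reduceMod b Z ∘ₗ (ker e).subtype) (ker φ) := by
  obtain ⟨e, he, hre⟩ := exists_surjective_lift hb hr
  refine ⟨e, he, hre, hN.ker_of_surjective _ he, ?_, ?_⟩
  · exact ker_reduceMod_comp_subtype_le (ker_inf_smul_top_le_of_tor_one b he (hN 1 one_pos))
  · rw [range_comp, Submodule.range_subtype, map_ker_reduceMod hr.ker_le he hre]

theorem exists_lift_into_submodule {Z' : Type u} (hb : IsNilpotent b)
    {K : Submodule B (Z →₀ B)} (hK : IsTorAcyclic B (B ⧸ b) K)
    {φ : (Z' →₀ B ⧸ b) →ₗ[B] (Z →₀ B ⧸ b)}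
    (hKr : IsReductionOnto b (reduceMod b Z ∘ₗ K.subtype) (range φ)) :
    ∃ d : (Z' →₀ B) →ₗ[B] (Z →₀ B), range d = K ∧
      reduceMod b Z ∘ₗ d = φ ∘ₗ reduceMod b Z' ∧ IsTorAcyclic B (B ⧸ b) (ker d) ∧
      IsReductionOnto b (reduceMod b Z' ∘ₗ (ker d).subtype) (ker φ) := by
  obtain ⟨e, he, hre, htor, hred⟩ := exists_lift hb hK hKr
  have hker : ker (K.subtype ∘ₗ e) = ker e := ker_comp_of_ker_eq_bot _ K.ker_subtype
  exact ⟨K.subtype ∘ₗ e, range_subtype_comp_of_surjective he, hre, hker ▸ htor, hker ▸ hred⟩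

end Lifting

/-- Lifting of free resolutions along a nilpotent quotient: let `B` be a commutative ring,
`𝔟` a nilpotent ideal, `B̄ = B/𝔟`, and `M` a `B`-module with `Tor_i^B(B̄, M) = 0` for
`i > 0`. Given a free resolution `⋯ → P̄^{-1} → P̄^{0} → B̄ ⊗_B M → 0` of `B̄ ⊗_B M`
over `B̄`, where `P̄^{-i}` is free on the set `Z i`, there is a free resolution
`⋯ → P^{-1} → P^{0} → M → 0` of `M` over `B` with `P^{-i}` free on `Z i`, which reduces
to the given one upon applying `B̄ ⊗_B -` (expressed on the basis elements). -/
theorem lift_free_resolution_nilpotent {B : Type u} [CommRing B] (b : Ideal B)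
    (hnil : ∃ n : ℕ, b ^ n = ⊥)
    (M : Type u) [AddCommGroup M] [Module B M]
    (htor : ∀ i > 0, Subsingleton (((Tor (ModuleCat.{u} B) i).obj
      (ModuleCat.of B (B ⧸ b))).obj (ModuleCat.of B M)))
    (Z : ℕ → Type u)
    (dbar : ∀ i : ℕ, (Z (i + 1) →₀ (B ⧸ b)) →ₗ[B ⧸ b] (Z i →₀ (B ⧸ b)))
    (ebar : (Z 0 →₀ (B ⧸ b)) →ₗ[B ⧸ b] ((B ⧸ b) ⊗[B] M))
    (hsurj : Function.Surjective ebar)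
    (hex0 : LinearMap.ker ebar = LinearMap.range (dbar 0))
    (hex : ∀ i : ℕ, LinearMap.ker (dbar i) = LinearMap.range (dbar (i + 1))) :
    ∃ (d : ∀ i : ℕ, (Z (i + 1) →₀ B) →ₗ[B] (Z i →₀ B)) (e : (Z 0 →₀ B) →ₗ[B] M),
      Function.Surjective e ∧
      LinearMap.ker e = LinearMap.range (d 0) ∧
      (∀ i : ℕ, LinearMap.ker (d i) = LinearMap.range (d (i + 1))) ∧
      (∀ (i : ℕ) (z : Z (i + 1)),
        Finsupp.mapRange (⇑(Ideal.Quotient.mk b)) (map_zero _)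
          (d i (Finsupp.single z 1)) = dbar i (Finsupp.single z 1)) ∧
      (∀ z : Z 0, (1 : B ⧸ b) ⊗ₜ[B] e (Finsupp.single z 1) = ebar (Finsupp.single z 1)) := by
  obtain ⟨e, he, hre, htor₀, hred₀⟩ := exists_lift (Z := Z 0) hnil htor
    (r := TensorProduct.mk B (B ⧸ b) M 1) (φ := ebar.restrictScalars B)
    ⟨(ker_mk_one_quotient b M).le, by
      rw [range_eq_top.2 (mk_one_quotient_surjective b M), range_restrictScalars,
        range_eq_top.2 hsurj, Submodule.restrictScalars_top]⟩
  have hexR (i : ℕ) :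
      ker ((dbar i).restrictScalars B) = range ((dbar (i + 1)).restrictScalars B) := by
    rw [ker_restrictScalars, hex i, range_restrictScalars]
  let IsLiftedKernel n (K : Submodule B (Z n →₀ B)) : Prop := IsTorAcyclic B (B ⧸ b) K ∧
    IsReductionOnto b (reduceMod b _ ∘ₗ K.subtype) (range ((dbar n).restrictScalars B))
  choose d hd_range hd_red hd_tor hd_ker using fun n (K : {K // IsLiftedKernel n K}) =>
    exists_lift_into_submodule hnil K.2.1 K.2.2
  let K : ∀ n, {K // IsLiftedKernel n K} := fun n => Nat.rec
    ⟨ker e, htor₀, by rwa [ker_restrictScalars, hex0, ← range_restrictScalars] at hred₀⟩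
    (fun n K => ⟨ker (d n K), hd_tor n K, hexR n ▸ hd_ker n K⟩) n
  refine ⟨fun n => d n (K n), e, he, (hd_range 0 (K 0)).symm,
    fun n => (hd_range (n + 1) (K (n + 1))).symm, fun n z => ?_, fun z => ?_⟩
  · refine (LinearMap.congr_fun (hd_red n (K n)) (Finsupp.single z 1)).trans ?_
    simp
  · simpa using LinearMap.congr_fun hre (Finsupp.single z 1)
end

section
/- Every flat 𝔞-adic system admits a free resolution: if {M_k} is an 𝔞-adic system in which each M_k is a flat A_k-module, then there exist free A_k-module resolutions of the M_k with common basis sets, compatible under the reduction maps A_{k+1} → A_k. -/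
/-- The canonical `A`-linear reduction map `A/𝔞^{k+2} → A/𝔞^{k+1}`. -/
def quotPowRed {A : Type*} [CommRing A] (a : Ideal A) (k : ℕ) :
    (A ⧸ a ^ (k + 2)) →ₗ[A] (A ⧸ a ^ (k + 1)) :=
  Submodule.mapQ _ _ LinearMap.id (by
    rw [Submodule.comap_id]
    exact Ideal.pow_le_pow_right (Nat.le_succ _))

/-!
Let `Z` be the inverse limit of the sets `M_k`. The transition maps are surjective, so every
element of `M_k` extends to a point of `Z`, and evaluation at level `k` makes the free
`A_k`-module `F_k` on `Z` surject onto `M_k`, compatibly with reduction. The kernels `K_k` of these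
surjections are flat, being kernels of surjections between flat modules, and they form again an
`𝔞`-adic system: `K_{k+1} → K_k` is onto because `ker ν_k = 𝔞^{k+1} M_{k+1}` is the image of
`𝔞^{k+1} F_{k+1}`, which reduction kills, and its kernel `K_{k+1} ∩ 𝔞^{k+1} F_{k+1}` is
`𝔞^{k+1} K_{k+1}` because `M_{k+1}` is flat. Iterating the construction yields the resolution.
-/

open Function LinearMap

universe u

theorem Module.Flat.ker_of_surjective {R M N : Type*} [CommRing R]
    [AddCommGroup M] [Module R M] [Module.Flat R M] [AddCommGroup N] [Module R N] [Module.Flat R N]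
    (f : M →ₗ[R] N) (hf : Surjective f) : Module.Flat R (ker f) := by
  refine Module.Flat.iff_rTensor_injective'.mpr fun I ↦ ?_
  have hcomp : (ker f).subtype.lTensor R ∘ₗ I.subtype.rTensor (ker f) =
      I.subtype.rTensor M ∘ₗ (ker f).subtype.lTensor I := by
    rw [rTensor_comp_lTensor, lTensor_comp_rTensor]
  refine Injective.of_comp (f := (ker f).subtype.lTensor R) ?_
  rw [← LinearMap.coe_comp, hcomp, LinearMap.coe_comp]
  exact (Module.Flat.iff_rTensor_injective'.mp ‹_› I).comp
    (lTensor_injective_of_exact_of_flat f hf _ (ker f).injective_subtype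
      (exact_subtype_ker_map f) I)

theorem exists_compatible_seq_of_surjective {X : ℕ → Type*} (f : ∀ n, X (n + 1) → X n)
    (hf : ∀ n, Surjective (f n)) (k : ℕ) (x : X k) :
    ∃ s : ∀ n, X n, (∀ n, f n (s (n + 1)) = s n) ∧ s k = x := by
  induction k generalizing X with
  | zero =>
    refine ⟨fun n ↦ Nat.rec (motive := X) x (fun n y ↦ surjInv (hf n) y) n,
      fun n ↦ surjInv_eq (hf n) _, rfl⟩
  | succ k ih =>
    obtain ⟨s, hs, rfl⟩ :=
      ih (X := fun n ↦ X (n + 1)) (fun n ↦ f (n + 1)) (fun n ↦ hf (n + 1)) x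
    refine ⟨fun n ↦ Nat.casesOn (motive := X) n (f 0 (s 0)) s, fun n ↦ ?_, rfl⟩
    cases n with
    | zero => rfl
    | succ n => exact hs n

section quotPowRed

variable {A : Type*} [CommRing A] (a : Ideal A) (k : ℕ)

theorem quotPowRed_mk (x : A) :
    quotPowRed a k (Ideal.Quotient.mk _ x) = Ideal.Quotient.mk _ x :=
  rfl

theorem quotPowRed_surjective : Surjective (quotPowRed a k) :=
  Submodule.factor_surjective (Ideal.pow_le_pow_right (Nat.le_succ _))

theorem ker_quotPowRed :
    ker (quotPowRed a k) = a ^ (k + 1) • (⊤ : Submodule A (A ⧸ a ^ (k + 2))) := by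
  ext x
  obtain ⟨x, rfl⟩ := Ideal.Quotient.mk_surjective x
  rw [Ideal.smul_top_eq_map, Submodule.restrictScalars_mem, Ideal.Quotient.algebraMap_eq,
    Ideal.mem_quotient_iff_mem_sup, sup_eq_left.mpr (Ideal.pow_le_pow_right (Nat.le_succ _)),
    mem_ker, quotPowRed_mk, Ideal.Quotient.eq_zero_iff_mem]

theorem ker_mapRange_quotPowRed (Z : Type*) :
    ker (Finsupp.mapRange.linearMap (α := Z) (quotPowRed a k)) =
      a ^ (k + 1) • (⊤ : Submodule A (Z →₀ A ⧸ a ^ (k + 2))) := by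
  rw [Finsupp.ker_mapRange, ker_quotPowRed, Finsupp.submodule_smul, Finsupp.submodule_top]

end quotPowRed

theorem LinearMap.restrictScalars_ker_inf_smul_top_eq_smul_of_flat {A R F M : Type*}
    [CommRing A] [CommRing R] [Algebra A R]
    [AddCommGroup F] [Module A F] [Module R F] [IsScalarTower A R F]
    [AddCommGroup M] [Module R M] [Module.Flat R M] (f : F →ₗ[R] M) (hf : Surjective f)
    (I : Ideal A) :
    (ker f).restrictScalars A ⊓ I • ⊤ = I • (ker f).restrictScalars A := by
  rw [← Ideal.smul_restrictScalars, ← ker_inf_smul_top_eq_smul_of_flat _ f hf,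
    Submodule.restrictScalars_inf, Ideal.smul_restrictScalars, Submodule.restrictScalars_top]

structure FlatAdicSystem (A : Type u) [CommRing A] (a : Ideal A) : Type (u + 1) where
  M : ℕ → Type u
  [instAddCommGroup : ∀ k, AddCommGroup (M k)]
  [instModule : ∀ k, Module A (M k)]
  [instModuleQuotient : ∀ k, Module (A ⧸ a ^ (k + 1)) (M k)]
  [instIsScalarTower : ∀ k, IsScalarTower A (A ⧸ a ^ (k + 1)) (M k)]
  [instFlat : ∀ k, Module.Flat (A ⧸ a ^ (k + 1)) (M k)]
  ν : ∀ k, M (k + 1) →ₗ[A] M k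
  surjective_ν : ∀ k, Surjective (ν k)
  ker_ν : ∀ k, ker (ν k) = a ^ (k + 1) • (⊤ : Submodule A (M (k + 1)))

attribute [instance] FlatAdicSystem.instAddCommGroup FlatAdicSystem.instModule
  FlatAdicSystem.instModuleQuotient FlatAdicSystem.instIsScalarTower FlatAdicSystem.instFlat

namespace FlatAdicSystem

variable {A : Type u} [CommRing A] {a : Ideal A} (S : FlatAdicSystem A a)

def InverseLimit : Type u := {s : ∀ k, S.M k // ∀ k, S.ν k (s (k + 1)) = s k}

theorem exists_inverseLimit_apply_eq (k : ℕ) (m : S.M k) : ∃ s : S.InverseLimit, s.1 k = m :=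
  let ⟨s, hs, hsk⟩ := exists_compatible_seq_of_surjective (fun k ↦ S.ν k) S.surjective_ν k m
  ⟨⟨s, hs⟩, hsk⟩

noncomputable def eval (k : ℕ) :
    (S.InverseLimit →₀ A ⧸ a ^ (k + 1)) →ₗ[A ⧸ a ^ (k + 1)] S.M k :=
  Finsupp.linearCombination _ fun s ↦ s.1 k

theorem eval_surjective (k : ℕ) : Surjective (S.eval k) := fun m ↦
  let ⟨s, hs⟩ := S.exists_inverseLimit_apply_eq k m
  ⟨Finsupp.single s 1, by rw [eval, Finsupp.linearCombination_single, one_smul, hs]⟩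

theorem ν_comp_eval (k : ℕ) :
    S.ν k ∘ₗ (S.eval (k + 1)).restrictScalars A =
      (S.eval k).restrictScalars A ∘ₗ Finsupp.mapRange.linearMap (quotPowRed a k) := by
  refine Finsupp.lhom_ext fun s c ↦ ?_
  obtain ⟨x, rfl⟩ := Ideal.Quotient.mk_surjective c
  simp only [coe_comp, comp_apply, restrictScalars_apply, Finsupp.mapRange.linearMap_apply,
    Finsupp.mapRange_single, eval, Finsupp.linearCombination_single]
  rw [quotPowRed_mk]
  simp only [← Ideal.Quotient.algebraMap_eq, algebraMap_smul, map_smul, s.2 k]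

theorem mapRange_mem_ker_eval {k : ℕ} {x : S.InverseLimit →₀ A ⧸ a ^ (k + 2)}
    (hx : x ∈ ker (S.eval (k + 1))) :
    Finsupp.mapRange.linearMap (quotPowRed a k) x ∈ ker (S.eval k) := by
  have h := LinearMap.congr_fun (S.ν_comp_eval k) x
  rw [mem_ker] at hx ⊢
  simpa [hx] using h.symm

noncomputable def kerReduce (k : ℕ) :
    (ker (S.eval (k + 1))).restrictScalars A →ₗ[A] (ker (S.eval k)).restrictScalars A :=
  (Finsupp.mapRange.linearMap (quotPowRed a k)).restrict fun _ ↦ S.mapRange_mem_ker_eval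

theorem kerReduce_surjective (k : ℕ) : Surjective (S.kerReduce k) := by
  rintro ⟨y, hy⟩
  obtain ⟨x, rfl⟩ := Finsupp.mapRange_surjective _ (map_zero _) (quotPowRed_surjective a k) y
  have hx : (S.eval (k + 1)).restrictScalars A x ∈ a ^ (k + 1) • (⊤ : Submodule A _) := by
    rw [← S.ker_ν, mem_ker, ← LinearMap.comp_apply (S.ν k), S.ν_comp_eval]
    exact hy
  have hlift : a ^ (k + 1) • (⊤ : Submodule A (S.M (k + 1))) =
      (a ^ (k + 1) • ⊤ : Submodule A _).map ((S.eval (k + 1)).restrictScalars A) := by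
    rw [Submodule.map_smul'', Submodule.map_top,
      (range_eq_top (f := (S.eval (k + 1)).restrictScalars A)).mpr (S.eval_surjective _)]
  obtain ⟨c, hc, hcx⟩ := hlift ▸ hx
  have hc0 : Finsupp.mapRange.linearMap (quotPowRed a k) c = 0 := by
    rwa [← mem_ker, ker_mapRange_quotPowRed]
  refine ⟨⟨x - c, ?_⟩, Subtype.ext ?_⟩
  · rw [Submodule.restrictScalars_mem, mem_ker, map_sub, sub_eq_zero]
    exact hcx.symm
  · change Finsupp.mapRange.linearMap (quotPowRed a k) (x - c) = _
    rw [map_sub, hc0, sub_zero]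
    rfl

theorem ker_kerReduce (k : ℕ) :
    ker (S.kerReduce k) =
      a ^ (k + 1) • (⊤ : Submodule A ((ker (S.eval (k + 1))).restrictScalars A)) := by
  ext v
  rw [mem_ker, Submodule.mem_smul_top_iff,
    ← restrictScalars_ker_inf_smul_top_eq_smul_of_flat _ (S.eval_surjective (k + 1)),
    ← ker_mapRange_quotPowRed, Submodule.mem_inf, and_iff_right v.2, mem_ker, ← Subtype.val_inj]
  rfl

noncomputable abbrev syzygy : FlatAdicSystem A a where
  M k := (ker (S.eval k)).restrictScalars A
  instFlat k := by exact Module.Flat.ker_of_surjective _ (S.eval_surjective k)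
  ν := S.kerReduce
  surjective_ν := S.kerReduce_surjective
  ker_ν := S.ker_kerReduce

noncomputable def differential (k : ℕ) :
    (S.syzygy.InverseLimit →₀ A ⧸ a ^ (k + 1)) →ₗ[A] (S.InverseLimit →₀ A ⧸ a ^ (k + 1)) :=
  ((ker (S.eval k)).restrictScalars A).subtype ∘ₗ (S.syzygy.eval k).restrictScalars A

theorem range_differential (k : ℕ) :
    range (S.differential k) = ker ((S.eval k).restrictScalars A) := by
  rw [differential, range_comp,
    (range_eq_top (f := (S.syzygy.eval k).restrictScalars A)).mpr (S.syzygy.eval_surjective k),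
    Submodule.map_top, Submodule.range_subtype, ker_restrictScalars]

theorem ker_differential (k : ℕ) :
    ker (S.differential k) = ker ((S.syzygy.eval k).restrictScalars A) :=
  ker_comp_of_ker_eq_bot _ (Submodule.ker_subtype _)

theorem mapRange_comp_differential (k : ℕ) :
    Finsupp.mapRange.linearMap (quotPowRed a k) ∘ₗ S.differential (k + 1) =
      S.differential k ∘ₗ Finsupp.mapRange.linearMap (quotPowRed a k) := by
  rw [differential, differential, LinearMap.comp_assoc, ← S.syzygy.ν_comp_eval k]
  rfl

noncomputable def syzygies : ℕ → FlatAdicSystem A a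
  | 0 => S
  | i + 1 => (syzygies i).syzygy

end FlatAdicSystem

/-- Every flat `𝔞`-adic system admits a free resolution: if `{M_k}` is an `𝔞`-adic
system in which each `M_k` is a flat `A_k = A/𝔞^{k+1}`-module, then there exist free
`A_k`-module resolutions of the `M_k` with common basis sets `Z i`, compatible under
the reduction maps `A_{k+1} → A_k`. -/
theorem free_resolution_of_flat_adic_system {A : Type u} [CommRing A]
    (a : Ideal A)
    (M : ℕ → Type u) [∀ k, AddCommGroup (M k)] [∀ k, Module A (M k)]
    [∀ k, Module (A ⧸ a ^ (k + 1)) (M k)]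
    [∀ k, IsScalarTower A (A ⧸ a ^ (k + 1)) (M k)]
    [∀ k, Module.Flat (A ⧸ a ^ (k + 1)) (M k)]
    (ν : ∀ k, M (k + 1) →ₗ[A] M k)
    (hsurj : ∀ k, Function.Surjective (ν k))
    (hker : ∀ k, LinearMap.ker (ν k) = (a ^ (k + 1)) • (⊤ : Submodule A (M (k + 1)))) :
    ∃ (Z : ℕ → Type u)
      (d : ∀ (k i : ℕ), (Z (i + 1) →₀ (A ⧸ a ^ (k + 1))) →ₗ[A] (Z i →₀ (A ⧸ a ^ (k + 1))))
      (e : ∀ k : ℕ, (Z 0 →₀ (A ⧸ a ^ (k + 1))) →ₗ[A] M k),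
      (∀ k, Function.Surjective (e k)) ∧
      (∀ k, LinearMap.ker (e k) = LinearMap.range (d k 0)) ∧
      (∀ k i, LinearMap.ker (d k i) = LinearMap.range (d k (i + 1))) ∧
      (∀ k i, (Finsupp.mapRange.linearMap (quotPowRed a k)) ∘ₗ d (k + 1) i =
        d k i ∘ₗ (Finsupp.mapRange.linearMap (quotPowRed a k))) ∧
      (∀ k, (ν k) ∘ₗ e (k + 1) = e k ∘ₗ (Finsupp.mapRange.linearMap (quotPowRed a k))) := by
  let S : FlatAdicSystem A a := ⟨M, ν, hsurj, hker⟩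
  refine ⟨fun i ↦ (S.syzygies i).InverseLimit, fun k i ↦ (S.syzygies i).differential k,
    fun k ↦ (S.eval k).restrictScalars A, fun k ↦ S.eval_surjective k,
    fun k ↦ (S.range_differential k).symm,
    fun k i ↦ ((S.syzygies i).ker_differential k).trans
      ((S.syzygies (i + 1)).range_differential k).symm,
    fun k i ↦ (S.syzygies i).mapRange_comp_differential k, S.ν_comp_eval⟩
end

section
/- Let A be a noetherian commutative ring, 𝔞 an ideal, and {M_k} an 𝔞-adic system in which each M_k is a flat A/𝔞^{k+1}-module. Then the limit M̂ = lim M_k is a flat A-module. -/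
open Module LinearMap Submodule

namespace Matrix

variable {R : Type*} [CommRing R] {ι κ : Type*} [Fintype ι]

/-- `B ⊗ P`, under the identification `Rⁱ ⊗ P ≅ Pⁱ`. -/
def mulVecModule (B : Matrix κ ι R) (P : Type*) [AddCommGroup P] [Module R P] :
    (ι → P) →ₗ[R] (κ → P) where
  toFun w k := ∑ i, B k i • w i
  map_add' v w := by ext k; simp [smul_add, Finset.sum_add_distrib]
  map_smul' c w := by ext k; simp [Finset.smul_sum, smul_comm c]

variable (B : Matrix κ ι R) {P Q : Type*} [AddCommGroup P] [Module R P] [AddCommGroup Q]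
  [Module R Q]

@[simp]
theorem mulVecModule_apply (w : ι → P) (k : κ) :
    B.mulVecModule P w k = ∑ i, B k i • w i :=
  rfl

theorem mulVecModule_compLeft (g : P →ₗ[R] Q) (w : ι → P) :
    B.mulVecModule Q (g.compLeft ι w) = g.compLeft κ (B.mulVecModule P w) := by
  ext k; simp

end Matrix

namespace Submodule

variable {R : Type*} [CommRing R] {ι : Type*}

theorem mem_smul_top_pi_iff [Finite ι] (I : Ideal R) (v : ι → R) :
    v ∈ I • (⊤ : Submodule R (ι → R)) ↔ ∀ i, v i ∈ I := by
  have := Fintype.ofFinite ι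
  classical
  refine ⟨fun hv i => ?_, fun hv => ?_⟩
  · have := mem_map_of_mem (f := LinearMap.proj (R := R) (φ := fun _ : ι => R) i) hv
    rw [map_smul'', map_top, range_eq_top.mpr (proj_surjective i)] at this
    simpa using this
  · rw [← Finset.univ_sum_single v]
    refine sum_mem fun i _ => ?_
    have h := smul_mem_smul (hv i) (mem_top (x := (Pi.single i 1 : ι → R)))
    rwa [← Pi.single_smul', smul_eq_mul, mul_one] at h

/-- The image of `K ⊗ P` in `ι → P`. -/
def tensorSpan (K : Submodule R (ι → R)) (P : Type*) [AddCommGroup P] [Module R P] :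
    Submodule R (ι → P) :=
  span R {w | ∃ v ∈ K, ∃ y : P, w = fun i => v i • y}

variable {P Q : Type*} [AddCommGroup P] [Module R P] [AddCommGroup Q] [Module R Q]

theorem smul_mem_tensorSpan {K : Submodule R (ι → R)} {v : ι → R} (hv : v ∈ K) (y : P) :
    (fun i => v i • y) ∈ K.tensorSpan P :=
  subset_span ⟨v, hv, y, rfl⟩

theorem tensorSpan_le_ker_mulVecModule [Fintype ι] {κ : Type*} {K : Submodule R (ι → R)}
    {B : Matrix κ ι R} (hK : K ≤ ker B.mulVecLin) :
    K.tensorSpan P ≤ ker (B.mulVecModule P) := by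
  refine span_le.mpr ?_
  rintro _ ⟨v, hv, y, rfl⟩
  have hBv : ∀ k, ∑ i, B k i * v i = 0 := congrFun (hK hv)
  ext k
  simp [smul_smul, ← Finset.sum_smul, hBv]

theorem tensorSpan_range_mulVecLin_le [Fintype ι] {τ : Type*} [Fintype τ] (C : Matrix ι τ R) :
    (range C.mulVecLin).tensorSpan P ≤ range (C.mulVecModule P) := by
  refine span_le.mpr ?_
  rintro _ ⟨_, ⟨u, rfl⟩, y, rfl⟩
  refine ⟨fun q => u q • y, ?_⟩
  ext i
  simp [Matrix.mulVec, dotProduct, smul_smul, Finset.sum_smul]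

theorem tensorSpan_le_map_of_surjective (K : Submodule R (ι → R)) {g : P →ₗ[R] Q}
    (hg : Function.Surjective g) : K.tensorSpan Q ≤ (K.tensorSpan P).map (g.compLeft ι) := by
  refine span_le.mpr ?_
  rintro _ ⟨v, hv, y, rfl⟩
  obtain ⟨x, rfl⟩ := hg y
  exact ⟨_, smul_mem_tensorSpan hv x, by ext; simp⟩

theorem map_tensorSpan_le_of_isTorsionBySet [Finite ι] {K L : Submodule R (ι → R)}
    {J : Ideal R} (hQ : IsTorsionBySet R Q J) (hKL : K ≤ L ⊔ J • ⊤) (g : P →ₗ[R] Q) :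
    (K.tensorSpan P).map (g.compLeft ι) ≤ L.tensorSpan Q := by
  rw [tensorSpan, map_span_le]
  rintro _ ⟨v, hv, y, rfl⟩
  obtain ⟨l, hl, h, hh, rfl⟩ := mem_sup.mp (hKL hv)
  rw [mem_smul_top_pi_iff] at hh
  convert smul_mem_tensorSpan hl (g y) using 1
  ext i
  simp [add_smul, hQ (a := ⟨h i, hh i⟩)]

end Submodule

theorem LinearMap.comap_smul_top_le_ker_sup {R : Type*} [CommRing R] {N N' : Type*}
    [AddCommGroup N] [Module R N] [AddCommGroup N'] [Module R N'] {I J : Ideal R}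
    (φ : N →ₗ[R] N') (h : I • ⊤ ⊓ range φ ≤ J • range φ) :
    (I • ⊤ : Submodule R N').comap φ ≤ ker φ ⊔ J • ⊤ := by
  intro v hv
  have hφv := h ⟨hv, mem_range_self φ v⟩
  rw [range_eq_map, ← map_smul''] at hφv
  obtain ⟨u, hu, huv⟩ := hφv
  exact mem_sup.mpr ⟨v - u, by simp [huv], u, hu, by abel⟩

def Ideal.IsArtinReesNumber {R : Type*} [CommRing R] {N : Type*} [AddCommGroup N]
    [Module R N] (I : Ideal R) (L : Submodule R N) (c : ℕ) : Prop :=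
  ∀ m n, m + c ≤ n → I ^ n • ⊤ ⊓ L ≤ I ^ m • L

theorem Ideal.exists_isArtinReesNumber {R : Type*} [CommRing R] [IsNoetherianRing R]
    {N : Type*} [AddCommGroup N] [Module R N] [Module.Finite R N] (I : Ideal R)
    (L : Submodule R N) : ∃ c, I.IsArtinReesNumber L c := by
  obtain ⟨c, hc⟩ := I.exists_pow_inf_eq_pow_smul L
  refine ⟨c, fun m n h => ?_⟩
  rw [hc n (by omega)]
  exact smul_mono (Ideal.pow_le_pow_right (by omega)) inf_le_right

theorem Module.isTorsionBySet_of_isScalarTower_quotient {R : Type*} [CommRing R] (I : Ideal R)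
    {P : Type*} [AddCommGroup P] [Module R P] [Module (R ⧸ I) P] [IsScalarTower R (R ⧸ I) P] :
    IsTorsionBySet R P I := fun y b => by
  rw [← algebraMap_smul (R ⧸ I), Ideal.Quotient.algebraMap_eq,
    Ideal.Quotient.eq_zero_iff_mem.mpr b.2, zero_smul]

namespace Matrix

variable {R : Type*} [CommRing R] {ι κ : Type*} [Fintype ι] [Fintype κ]

theorem ker_mulVecModule_le_tensorSpan {P : Type*} [AddCommGroup P] [Module R P] [Flat R P]
    (B : Matrix κ ι R) : ker (B.mulVecModule P) ≤ (ker B.mulVecLin).tensorSpan P := by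
  classical
  let e := TensorProduct.piScalarRight R R P ι
  have hB : B.mulVecModule P ∘ₗ e =
      TensorProduct.piScalarRight R R P κ ∘ₗ B.mulVecLin.lTensor P := by
    ext y i k
    simp [e, Pi.single_apply]
  intro w hw
  rw [mem_ker] at hw
  obtain ⟨t, ht⟩ :=
    (Flat.lTensor_exact P (exact_subtype_ker_map B.mulVecLin) (e.symm w)).mp <| by
      apply (TensorProduct.piScalarRight R R P κ).injective
      simpa [hw] using (LinearMap.congr_fun hB (e.symm w)).symm
  rw [← e.apply_symm_apply w, ← ht]
  clear ht
  induction t using TensorProduct.induction_on with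
  | zero => simp
  | tmul y v => simpa [e] using smul_mem_tensorSpan v.2 y
  | add t₁ t₂ h₁ h₂ => simpa using add_mem h₁ h₂

theorem ker_mulVecModule_le_tensorSpan_comap_smul_top (I : Ideal R) {P : Type*}
    [AddCommGroup P] [Module R P] [Module (R ⧸ I) P] [IsScalarTower R (R ⧸ I) P]
    [Flat (R ⧸ I) P] (B : Matrix κ ι R) :
    ker (B.mulVecModule P) ≤
      ((I • ⊤ : Submodule R (κ → R)).comap B.mulVecLin).tensorSpan P := by
  intro w hw
  have hw' : w ∈ ker ((B.map (Ideal.Quotient.mk I)).mulVecModule P) := by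
    simpa [funext_iff, ← Ideal.Quotient.algebraMap_eq, algebraMap_smul] using hw
  have hw'' := ker_mulVecModule_le_tensorSpan _ hw'
  rw [tensorSpan, ← SetLike.mem_coe, coe_span_eq_span_of_surjective R (R ⧸ I)
    Ideal.Quotient.mk_surjective] at hw''
  refine span_le.mpr ?_ hw''
  rintro _ ⟨v, hv, y, rfl⟩
  choose u hu using fun i => Ideal.Quotient.mk_surjective (I := I) (v i)
  have hvu : (fun i => v i • y) = fun i => u i • y := by
    ext i; rw [← hu, ← Ideal.Quotient.algebraMap_eq, algebraMap_smul]
  rw [hvu]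
  refine smul_mem_tensorSpan ?_ y
  rw [mem_comap, mulVecLin_apply, mem_smul_top_pi_iff]
  intro k
  rw [← Ideal.Quotient.eq_zero_iff_mem, RingHom.map_mulVec,
    show Ideal.Quotient.mk I ∘ u = v from funext hu]
  exact congrFun hv k

end Matrix

theorem exists_seq_mem_of_forall_exists_lift {X : ℕ → Type*} (π : ∀ k, X (k + 1) → X k)
    {T : ∀ k, Set (X k)} (h0 : (T 0).Nonempty)
    (hlift : ∀ k, ∀ w ∈ T k, ∃ w' ∈ T (k + 1), π k w' = w) :
    ∃ g : ∀ k, X k, ∀ k, g k ∈ T k ∧ π k (g (k + 1)) = g k := by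
  choose L hL hLπ using hlift
  let g : ∀ k, T k :=
    fun k => Nat.rec ⟨h0.some, h0.some_mem⟩ (fun k w => ⟨L k w w.2, hL k w w.2⟩) k
  exact ⟨fun k => (g k).1, fun k => ⟨(g k).2, hLπ k _ (g k).2⟩⟩

section InverseSystem

variable {A : Type*} [CommRing A] {M : ℕ → Type*} [∀ k, AddCommGroup (M k)]
  [∀ k, Module A (M k)] (ν : ∀ k, M (k + 1) →ₗ[A] M k)

def transitionMap {m n : ℕ} (h : m ≤ n) : M n →ₗ[A] M m :=
  Nat.leRecOn (C := fun k => M k →ₗ[A] M m) h (fun {k} g => g ∘ₗ ν k) LinearMap.id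

theorem transitionMap_refl (m : ℕ) : transitionMap ν (le_refl m) = LinearMap.id :=
  Nat.leRecOn_self _

theorem transitionMap_succ {m n : ℕ} (h : m ≤ n) (h' : m ≤ n + 1) :
    transitionMap ν h' = transitionMap ν h ∘ₗ ν n :=
  Nat.leRecOn_succ h _

theorem transitionMap_comp {m n k : ℕ} (h₁ : m ≤ n) (h₂ : n ≤ k) :
    transitionMap ν h₁ ∘ₗ transitionMap ν h₂ = transitionMap ν (h₁.trans h₂) := by
  induction k, h₂ using Nat.le_induction with
  | base => rw [transitionMap_refl]; rfl
  | succ k hnk ih =>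
    rw [transitionMap_succ ν hnk, transitionMap_succ ν (h₁.trans hnk), ← ih]
    rfl

theorem transitionMap_succ_left {m n : ℕ} (h : m + 1 ≤ n) (h' : m ≤ n) :
    ν m ∘ₗ transitionMap ν h = transitionMap ν h' := by
  rw [← transitionMap_comp ν m.le_succ h, transitionMap_succ ν le_rfl, transitionMap_refl]
  rfl

theorem transitionMap_surjective (hν : ∀ k, Function.Surjective (ν k)) {m n : ℕ}
    (h : m ≤ n) : Function.Surjective (transitionMap ν h) := by
  induction n, h using Nat.le_induction with
  | base => rw [transitionMap_refl]; exact Function.surjective_id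
  | succ n hmn ih => rw [transitionMap_succ ν hmn]; exact ih.comp (hν n)

theorem transitionMap_apply_of_compatible {x : ∀ k, M k} (hx : ∀ k, ν k (x (k + 1)) = x k)
    {m n : ℕ} (h : m ≤ n) : transitionMap ν h (x n) = x m := by
  induction n, h using Nat.le_induction with
  | base => rw [transitionMap_refl]; rfl
  | succ n hmn ih => rw [transitionMap_succ ν hmn, LinearMap.comp_apply, hx, ih]

variable {ι τ : Type*} [Fintype τ]

theorem mulVecModule_compLeft_transitionMap (C : Matrix ι τ A) {z : ∀ n, ι → M n}
    (hz : ∀ n i, ν n (z (n + 1) i) = z n i) {m n : ℕ} (h : m ≤ n) {σ : τ → M n}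
    (hσ : C.mulVecModule (M n) σ = z n) :
    C.mulVecModule (M m) ((transitionMap ν h).compLeft τ σ) = z m := by
  rw [Matrix.mulVecModule_compLeft, hσ]
  exact funext fun i => transitionMap_apply_of_compatible ν (x := fun k => z k i) (hz · i) h

def stableSolutions (C : Matrix ι τ A) (z : ∀ n, ι → M n) (c m : ℕ) : Set (τ → M m) :=
  {w | ∃ n, ∃ h : m ≤ n, m + c + 1 ≤ n ∧
    ∃ σ, C.mulVecModule (M n) σ = z n ∧ (transitionMap ν h).compLeft τ σ = w}

end InverseSystem

section AdicSystem

variable {A : Type*} [CommRing A] {a : Ideal A} {M : ℕ → Type*}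
  [∀ k, AddCommGroup (M k)] [∀ k, Module A (M k)] [∀ k, Module (A ⧸ a ^ (k + 1)) (M k)]
  [∀ k, IsScalarTower A (A ⧸ a ^ (k + 1)) (M k)] [∀ k, Flat (A ⧸ a ^ (k + 1)) (M k)]
  (ν : ∀ k, M (k + 1) →ₗ[A] M k) {ι κ τ : Type*} [Fintype ι] [Fintype κ] [Fintype τ]

/-- By flatness, `w ∈ ker (B ⊗ Mₙ)` is a sum of `v ⊗ y` with `B v ≡ 0 mod 𝔞ⁿ⁺¹`;
Artin–Rees corrects each `v` into `ker B` by a vector with entries in `𝔞ᵐ⁺¹`, which dies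
in `Mₘ`. -/
theorem map_ker_mulVecModule_le_tensorSpan (B : Matrix κ ι A) {c : ℕ}
    (hc : a.IsArtinReesNumber (range B.mulVecLin) c) {m n : ℕ} (h : m ≤ n)
    (hmn : m + c ≤ n) :
    (ker (B.mulVecModule (M n))).map ((transitionMap ν h).compLeft ι) ≤
      (ker B.mulVecLin).tensorSpan (M m) :=
  (map_mono (B.ker_mulVecModule_le_tensorSpan_comap_smul_top (a ^ (n + 1)))).trans <|
    map_tensorSpan_le_of_isTorsionBySet
      (isTorsionBySet_of_isScalarTower_quotient (a ^ (m + 1)))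
      (B.mulVecLin.comap_smul_top_le_ker_sup (hc (m + 1) (n + 1) (by omega))) _

theorem mem_range_mulVecModule_of_exact (B : Matrix κ ι A) (C : Matrix ι τ A)
    (hBC : range C.mulVecLin = ker B.mulVecLin) {c : ℕ}
    (hc : a.IsArtinReesNumber (range B.mulVecLin) c) {z : ∀ n, ι → M n}
    (hz : ∀ n i, ν n (z (n + 1) i) = z n i) (hBz : ∀ n, B.mulVecModule (M n) (z n) = 0)
    (m : ℕ) : z m ∈ range (C.mulVecModule (M m)) := by
  have hzm : (transitionMap ν (m.le_add_right c)).compLeft ι (z (m + c)) = z m :=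
    funext fun i => transitionMap_apply_of_compatible ν (x := fun k => z k i) (hz · i) _
  rw [← hzm]
  apply tensorSpan_range_mulVecLin_le C
  rw [hBC]
  exact map_ker_mulVecModule_le_tensorSpan ν B hc _ le_rfl ⟨_, hBz _, rfl⟩

/-- Two solutions at level `n` differ by an element of `ker (C ⊗ Mₙ)`, which `c` levels
down lies in `ker C ⊗ Mₘ` and therefore lifts to a kernel element at level `n + 1`. -/
theorem exists_lift_mem_stableSolutions (hν : ∀ k, Function.Surjective (ν k))
    (C : Matrix ι τ A) {c : ℕ} (hc : a.IsArtinReesNumber (range C.mulVecLin) c)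
    {z : ∀ n, ι → M n} (hz : ∀ n i, ν n (z (n + 1) i) = z n i)
    (hsol : ∀ n, z n ∈ range (C.mulVecModule (M n))) {m : ℕ} {w : τ → M m}
    (hw : w ∈ stableSolutions ν C z c m) :
    ∃ w' ∈ stableSolutions ν C z c (m + 1), (ν m).compLeft τ w' = w := by
  obtain ⟨n, h, hn, σ, hσ, rfl⟩ := hw
  obtain ⟨τ₀, hτ₀⟩ := hsol (n + 1)
  have hker : σ - (ν n).compLeft τ τ₀ ∈ ker (C.mulVecModule (M n)) := by
    rw [mem_ker, map_sub, Matrix.mulVecModule_compLeft, hτ₀, hσ, sub_eq_zero]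
    exact (funext (hz n)).symm
  obtain ⟨ρ, hρ, hρσ⟩ : (transitionMap ν h).compLeft τ (σ - (ν n).compLeft τ τ₀) ∈
      (ker (C.mulVecModule (M (n + 1)))).map
        ((transitionMap ν (h.trans n.le_succ)).compLeft τ) :=
    map_mono (tensorSpan_le_ker_mulVecModule le_rfl) <|
      tensorSpan_le_map_of_surjective _ (transitionMap_surjective ν hν _) <|
        map_ker_mulVecModule_le_tensorSpan ν C hc h (by omega) ⟨_, hker, rfl⟩
  refine ⟨(transitionMap ν (show m + 1 ≤ n + 1 by omega)).compLeft τ (τ₀ + ρ),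
    ⟨n + 1, _, by omega, τ₀ + ρ, by rw [map_add, hτ₀, mem_ker.mp hρ, add_zero], rfl⟩, ?_⟩
  funext q
  have hρq := congrFun hρσ q
  simp only [compLeft_apply, Function.comp_apply, Pi.sub_apply, map_sub] at hρq
  change ν m (transitionMap ν _ (τ₀ q + ρ q)) = transitionMap ν h (σ q)
  rw [← LinearMap.comp_apply (ν m), transitionMap_succ_left ν _ (h.trans n.le_succ), map_add,
    hρq, transitionMap_succ ν h, LinearMap.comp_apply]
  abel

theorem exists_compatible_solution (hν : ∀ k, Function.Surjective (ν k)) (C : Matrix ι τ A)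
    {c : ℕ} (hc : a.IsArtinReesNumber (range C.mulVecLin) c) {z : ∀ n, ι → M n}
    (hz : ∀ n i, ν n (z (n + 1) i) = z n i)
    (hsol : ∀ n, z n ∈ range (C.mulVecModule (M n))) :
    ∃ y : ∀ n, τ → M n, (∀ n, C.mulVecModule (M n) (y n) = z n) ∧
      ∀ n q, ν n (y (n + 1) q) = y n q := by
  have h0 : (stableSolutions ν C z c 0).Nonempty := by
    obtain ⟨σ, hσ⟩ := hsol (c + 1)
    exact ⟨_, c + 1, Nat.zero_le _, by omega, σ, hσ, rfl⟩
  obtain ⟨y, hy⟩ := exists_seq_mem_of_forall_exists_lift (fun k => (ν k).compLeft τ) h0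
    (fun k w hw => exists_lift_mem_stableSolutions ν hν C hc hz hsol hw)
  refine ⟨y, fun n => ?_, fun n q => congrFun (hy n).2 q⟩
  obtain ⟨k, h, -, σ, hσ, hσy⟩ := (hy n).1
  rw [← hσy]
  exact mulVecModule_compLeft_transitionMap ν C hz h hσ

theorem mem_range_mulVecModule_adicLimit (hν : ∀ k, Function.Surjective (ν k))
    (B : Matrix κ ι A) (C : Matrix ι τ A) (hBC : range C.mulVecLin = ker B.mulVecLin)
    (hB : ∃ c, a.IsArtinReesNumber (range B.mulVecLin) c)
    (hC : ∃ c, a.IsArtinReesNumber (range C.mulVecLin) c) {x : ι → adicLimit ν}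
    (hx : B.mulVecModule (adicLimit ν) x = 0) :
    x ∈ range (C.mulVecModule (adicLimit ν)) := by
  obtain ⟨cB, hcB⟩ := hB
  obtain ⟨cC, hcC⟩ := hC
  set z : ∀ n, ι → M n := fun n i => (x i).1 n
  have hz : ∀ n i, ν n (z (n + 1) i) = z n i := fun n i => (x i).2 n
  have hBz : ∀ n, B.mulVecModule (M n) (z n) = 0 := fun n => by
    ext k
    simpa [z] using congrArg (fun v => (v k).1 n) hx
  obtain ⟨y, hCy, hy⟩ := exists_compatible_solution ν hν C hcC hz
    (mem_range_mulVecModule_of_exact ν B C hBC hcB hz hBz)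
  refine ⟨fun q => ⟨fun n => y n q, fun n => hy n q⟩, ?_⟩
  ext i n
  simpa using congrFun (hCy n) i

end AdicSystem

theorem flat_adic_system_limit_flat_general {A : Type*} [CommRing A] [IsNoetherianRing A]
    (a : Ideal A)
    (M : ℕ → Type*) [∀ k, AddCommGroup (M k)] [∀ k, Module A (M k)]
    [∀ k, Module (A ⧸ a ^ (k + 1)) (M k)]
    [∀ k, IsScalarTower A (A ⧸ a ^ (k + 1)) (M k)]
    [∀ k, Module.Flat (A ⧸ a ^ (k + 1)) (M k)]
    (ν : ∀ k, M (k + 1) →ₗ[A] M k)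
    (hsurj : ∀ k, Function.Surjective (ν k)) :
    Module.Flat A (↥(adicLimit ν)) := by
  refine Flat.of_forall_isTrivialRelation fun {s} {f} {x} hfx => ?_
  set B := Matrix.replicateRow Unit f
  obtain ⟨t, r, hr⟩ :=
    fg_iff_exists_fin_generating_family.mp (IsNoetherian.noetherian (ker B.mulVecLin))
  set C := Matrix.of fun i q => r q i
  have hBC : range C.mulVecLin = ker B.mulVecLin := by
    rw [Matrix.range_mulVecLin]
    exact hr
  obtain ⟨y, hy⟩ := mem_range_mulVecModule_adicLimit ν hsurj B C hBC
    (a.exists_isArtinReesNumber _) (a.exists_isArtinReesNumber _) (x := x) <| by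
      ext _ n
      simpa [B] using congrArg (fun v : adicLimit ν => (v : ∀ k, M k) n) hfx
  refine ⟨t, fun i q => r q i, y, fun i => (congrFun hy i).symm, fun q => ?_⟩
  have hrq : r q ∈ ker B.mulVecLin := hr ▸ subset_span ⟨q, rfl⟩
  simpa [B, Matrix.mulVec, dotProduct] using congrFun hrq ()

/-- Let `A` be a noetherian commutative ring, `𝔞` an ideal, and `{M_k}` an `𝔞`-adic
system in which each `M_k` is a flat `A/𝔞^{k+1}`-module. Then the limit
`M̂ = lim M_k` is a flat `A`-module. -/
theorem flat_adic_system_limit_flat {A : Type*} [CommRing A] [IsNoetherianRing A]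
    (a : Ideal A)
    (M : ℕ → Type*) [∀ k, AddCommGroup (M k)] [∀ k, Module A (M k)]
    [∀ k, Module (A ⧸ a ^ (k + 1)) (M k)]
    [∀ k, IsScalarTower A (A ⧸ a ^ (k + 1)) (M k)]
    [∀ k, Module.Flat (A ⧸ a ^ (k + 1)) (M k)]
    (ν : ∀ k, M (k + 1) →ₗ[A] M k)
    (hsurj : ∀ k, Function.Surjective (ν k))
    (hker : ∀ k, LinearMap.ker (ν k) = (a ^ (k + 1)) • (⊤ : Submodule A (M (k + 1)))) :
    Module.Flat A (↥(adicLimit ν)) :=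
  flat_adic_system_limit_flat_general a M ν hsurj
end

section
/- Let A be a noetherian commutative ring, 𝔞 an ideal, and M a flat A-module. Then the 𝔞-adic completion M̂ = lim M/𝔞^{k+1}M is a flat A-module. -/
/-!
By the equational criterion it suffices to show that every relation `∑ gᵢ yᵢ = 0` in `M̂` is
trivial. Since `A` is noetherian, the relations among the `gᵢ` are finitely generated, so there is
an exact sequence `Aᵏ → Aˡ → A` whose second map is `g`. Tensoring with the flat module `M` gives
an exact sequence `Mᵏ → Mˡ → M`, and Artin–Rees, transported along `M ⊗ -` (which preserves
intersections of submodules because `M` is flat), makes both of its maps strict for the adic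
filtrations up to a fixed shift. Adic completion preserves exactness of such sequences: a Cauchy
sequence killed by the second map is congruent to one in the image of the first, and that one lifts
term by term to a Cauchy sequence. Hence `y ∈ M̂ˡ` comes from some `z ∈ M̂ᵏ`, which trivializes the
relation.
-/

open LinearMap TensorProduct Submodule

theorem Submodule.map₂_smul_right {R M N P : Type*} [CommRing R] [AddCommGroup M] [Module R M]
    [AddCommGroup N] [Module R N] [AddCommGroup P] [Module R P]
    (f : M →ₗ[R] N →ₗ[R] P) (p : Submodule R M) (I : Ideal R) (q : Submodule R N) :
    map₂ f p (I • q) = I • map₂ f p q := by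
  refine le_antisymm (map₂_le.mpr fun m hm n hn => ?_) (smul_le.mpr fun r hr x hx => ?_)
  · refine smul_induction_on hn (fun r hr n hn => ?_) (fun n₁ n₂ h₁ h₂ => ?_)
    · rw [map_smul]
      exact smul_mem_smul hr (apply_mem_map₂ f hm hn)
    · rw [map_add]
      exact add_mem h₁ h₂
  · rw [map₂_eq_span_image2] at hx
    induction hx using span_induction with
    | mem x hx =>
      obtain ⟨m, hm, n, hn, rfl⟩ := hx
      rw [← map_smul]
      exact apply_mem_map₂ f hm (smul_mem_smul hr hn)
    | zero => simp
    | add x y _ _ hx hy => rw [smul_add]; exact add_mem hx hy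
    | smul s x _ hx => rw [smul_comm]; exact smul_mem _ s hx

section

variable {A : Type*} [CommRing A] {M : Type*} [AddCommGroup M] [Module A M]
  {G : Type*} [AddCommGroup G] [Module A G]

theorem TensorProduct.range_lTensor_subtype (V : Submodule A G) :
    range (lTensor M V.subtype) = Submodule.map₂ (TensorProduct.mk A M G) ⊤ V := by
  rw [lTensor_def, range_map, range_id, range_subtype]

theorem Module.Flat.map₂_mk_top_inf [Module.Flat A M] (V W : Submodule A G) :
    Submodule.map₂ (TensorProduct.mk A M G) ⊤ (V ⊓ W) =
      Submodule.map₂ (TensorProduct.mk A M G) ⊤ V ⊓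
        Submodule.map₂ (TensorProduct.mk A M G) ⊤ W := by
  refine le_antisymm (le_inf (map₂_le_map₂_right inf_le_left) (map₂_le_map₂_right inf_le_right)) ?_
  simp only [← range_lTensor_subtype]
  rintro _ ⟨⟨y, rfl⟩, hW⟩
  have hexact : Function.Exact (inclusion (inf_le_left : V ⊓ W ≤ V)) (W.mkQ ∘ₗ V.subtype) := by
    rw [LinearMap.exact_iff, ker_comp, ker_mkQ, range_inclusion, comap_inf, comap_subtype_self,
      top_inf_eq]
  obtain ⟨y', rfl⟩ := (Module.Flat.lTensor_exact M hexact y).mp <| by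
    rwa [lTensor_comp, comp_apply, ← mem_ker, lTensor_mkQ]
  exact ⟨y', by rw [← comp_apply, ← lTensor_comp]; rfl⟩

variable {F : Type*} [AddCommGroup F] [Module A F]

/-- Artin–Rees property: up to a fixed shift `c`, the `I`-adic filtration of the source maps onto
the filtration that `range f` inherits from the target. -/
def LinearMap.IsAdicallyStrict (I : Ideal A) (f : F →ₗ[A] G) : Prop :=
  ∃ c, ∀ n, range f ⊓ I ^ (n + c) • ⊤ ≤ (I ^ n • ⊤ : Submodule A F).map f

theorem Module.Flat.isAdicallyStrict_lTensor [IsNoetherianRing A] [Module.Flat A M]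
    [Module.Finite A G] (I : Ideal A) (φ : F →ₗ[A] G) : (φ.lTensor M).IsAdicallyStrict I := by
  obtain ⟨c, hc⟩ := Ideal.exists_pow_inf_eq_pow_smul I (range φ)
  refine ⟨c, fun n => ?_⟩
  have hAR : range φ ⊓ I ^ (n + c) • ⊤ ≤ I ^ n • range φ := by
    rw [inf_comm, hc (n + c) le_add_self, Nat.add_sub_cancel]
    exact smul_mono_right _ inf_le_right
  have hrange : range (φ.lTensor M) = Submodule.map₂ (TensorProduct.mk A M G) ⊤ (range φ) := by
    rw [lTensor_range, range_lTensor_subtype]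
  calc range (φ.lTensor M) ⊓ I ^ (n + c) • ⊤
      = Submodule.map₂ (TensorProduct.mk A M G) ⊤ (range φ ⊓ I ^ (n + c) • ⊤) := by
        rw [Module.Flat.map₂_mk_top_inf, map₂_smul_right, map₂_mk_top_top_eq_top, hrange]
    _ ≤ Submodule.map₂ (TensorProduct.mk A M G) ⊤ (I ^ n • range φ) := map₂_le_map₂_right hAR
    _ = (I ^ n • ⊤ : Submodule A (M ⊗[A] F)).map (φ.lTensor M) := by
        rw [map₂_smul_right, ← hrange, map_smul'', Submodule.map_top]

theorem Submodule.map_smul_top_of_surjective {N : Type*} [AddCommGroup N] [Module A N]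
    (I : Ideal A) {e : F →ₗ[A] N} (he : Function.Surjective e) :
    (I • ⊤ : Submodule A F).map e = I • ⊤ := by
  rw [map_smul'', Submodule.map_top, range_eq_top.mpr he]

theorem LinearMap.IsAdicallyStrict.of_ladder_linearEquiv {I : Ideal A} {F' G' : Type*}
    [AddCommGroup F'] [AddCommGroup G'] [Module A F'] [Module A G'] {f : F →ₗ[A] G}
    {f' : F' →ₗ[A] G'} {e₁ : F ≃ₗ[A] F'} {e₂ : G ≃ₗ[A] G'}
    (h : f' ∘ₗ e₁ = e₂ ∘ₗ f) (hf : f.IsAdicallyStrict I) : f'.IsAdicallyStrict I := by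
  obtain ⟨c, hc⟩ := hf
  refine ⟨c, fun n => ?_⟩
  have hrange : range f' = (range f).map (e₂ : G →ₗ[A] G') := by
    rw [← range_comp, ← h, range_comp_of_range_eq_top _ (range_eq_top.mpr e₁.surjective)]
  calc range f' ⊓ I ^ (n + c) • ⊤
      = (range f ⊓ I ^ (n + c) • ⊤).map (e₂ : G →ₗ[A] G') := by
        rw [map_inf _ e₂.injective, hrange, map_smul_top_of_surjective _ e₂.surjective]
    _ ≤ ((I ^ n • ⊤ : Submodule A F).map f).map (e₂ : G →ₗ[A] G') := map_mono (hc n)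
    _ = (I ^ n • ⊤ : Submodule A F').map f' := by
        rw [← Submodule.map_comp, ← h, Submodule.map_comp,
          map_smul_top_of_surjective _ e₁.surjective]

namespace Matrix

variable {m n : Type*} [Fintype n]

variable (M) in
def mulVecLinOn (a : Matrix m n A) : (n → M) →ₗ[A] (m → M) :=
  LinearMap.pi fun i => ∑ j, a i j • LinearMap.proj j

theorem mulVecLinOn_apply (a : Matrix m n A) (v : n → M) (i : m) :
    a.mulVecLinOn M v i = ∑ j, a i j • v j := by
  simp [mulVecLinOn]

theorem mulVecLinOn_comp_piScalarRight [Fintype m] [DecidableEq m] [DecidableEq n]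
    (a : Matrix m n A) :
    a.mulVecLinOn M ∘ₗ (piScalarRight A A M n).toLinearMap =
      (piScalarRight A A M m).toLinearMap ∘ₗ a.mulVecLin.lTensor M := by
  ext x v i
  simp [mulVecLinOn_apply, Pi.single_apply]

theorem exists_exact_mulVecLin [IsNoetherianRing A] (G : Matrix m n A) :
    ∃ (k : ℕ) (T : Matrix n (Fin k) A), Function.Exact T.mulVecLin G.mulVecLin := by
  obtain ⟨k, t, ht⟩ := fg_iff_exists_fin_generating_family.mp
    (IsNoetherian.noetherian (ker G.mulVecLin))
  refine ⟨k, (of t)ᵀ, LinearMap.exact_iff.mpr ?_⟩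
  rw [range_mulVecLin, ← ht]
  rfl

variable {k : Type*} [Fintype k] [DecidableEq k] [Fintype m] [DecidableEq m] [DecidableEq n]

theorem exact_mulVecLinOn [Module.Flat A M] {T : Matrix n k A} {G : Matrix m n A}
    (h : Function.Exact T.mulVecLin G.mulVecLin) :
    Function.Exact (T.mulVecLinOn M) (G.mulVecLinOn M) :=
  Function.Exact.of_ladder_linearEquiv_of_exact (mulVecLinOn_comp_piScalarRight T)
    (mulVecLinOn_comp_piScalarRight G) (Module.Flat.lTensor_exact M h)

theorem isAdicallyStrict_mulVecLinOn [IsNoetherianRing A] [Module.Flat A M] (I : Ideal A)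
    (a : Matrix m n A) : (a.mulVecLinOn M).IsAdicallyStrict I :=
  (Module.Flat.isAdicallyStrict_lTensor I a.mulVecLin).of_ladder_linearEquiv
    (mulVecLinOn_comp_piScalarRight a)

end Matrix

namespace AdicCompletion

variable {I : Ideal A}

theorem mk_eq_mk_iff (a b : AdicCauchySequence I F) :
    mk I F a = mk I F b ↔ ∀ n, a n - b n ∈ (I ^ n • ⊤ : Submodule A F) := by
  simp only [AdicCompletion.ext_iff, mk_apply_coe, mkQ_apply, Submodule.Quotient.eq]

theorem AdicCauchySequence.sub_shift_mem (a : AdicCauchySequence I F) (n c : ℕ) :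
    a (n + c) - a n ∈ (I ^ n • ⊤ : Submodule A F) :=
  SModEq.sub_mem.mp (a.property (Nat.le_add_right n c)).symm

theorem exists_mk_eq_of_sub_mem (a : AdicCauchySequence I F) (b : ℕ → F)
    (h : ∀ n, b n - a n ∈ (I ^ n • ⊤ : Submodule A F)) :
    ∃ b' : AdicCauchySequence I F, ⇑b' = b ∧ mk I F b' = mk I F a := by
  have h' (n : ℕ) : b (n + 1) - a (n + 1) ∈ (I ^ n • ⊤ : Submodule A F) :=
    smul_mono_left (Ideal.pow_le_pow_right n.le_succ) (h (n + 1))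
  refine ⟨AdicCauchySequence.mk I F b fun n => ?_, rfl, (mk_eq_mk_iff _ _).mpr h⟩
  rw [SModEq.sub_mem]
  convert sub_mem (sub_mem (h n) (h' n)) (a.sub_shift_mem n 1) using 1
  abel

theorem mk_mem_range_map_of_forall_mem_range {f : F →ₗ[A] G} (hf : f.IsAdicallyStrict I)
    (b : AdicCauchySequence I G) (hb : ∀ n, b n ∈ range f) : mk I G b ∈ range (map I f) := by
  obtain ⟨c, hc⟩ := hf
  choose u hu using hb
  have hstep (n : ℕ) : b (n + 1 + c) - b (n + c) ∈ (I ^ n • ⊤ : Submodule A F).map f := by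
    refine hc n ⟨⟨u (n + 1 + c) - u (n + c), by rw [map_sub, hu, hu]⟩, ?_⟩
    simpa [add_right_comm n 1 c] using b.sub_shift_mem (n + c) 1
  choose δ hδ hfδ using hstep
  let v : AdicCauchySequence I F := AdicCauchySequence.mk I F
    (fun n => u c + ∑ k ∈ Finset.range n, δ k) fun n => by
      rw [SModEq.sub_mem, Finset.sum_range_succ]
      simpa using neg_mem (hδ n)
  have hfv (n : ℕ) : f (v n) = b (n + c) := by
    change f (u c + ∑ k ∈ Finset.range n, δ k) = b (n + c)
    rw [map_add, map_sum, hu, Finset.sum_congr rfl fun k _ => hfδ k,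
      Finset.sum_range_sub (fun k => b (k + c)) n, zero_add, add_sub_cancel]
  refine ⟨mk I F v, ?_⟩
  rw [map_mk, mk_eq_mk_iff]
  intro n
  simpa [hfv] using b.sub_shift_mem n c

variable {P : Type*} [AddCommGroup P] [Module A P]

theorem exists_mk_eq_of_map_eq_zero {f : F →ₗ[A] G} {g : G →ₗ[A] P} (hfg : Function.Exact f g)
    (hg : g.IsAdicallyStrict I) {y : AdicCompletion I G} (hy : map I g y = 0) :
    ∃ b : AdicCauchySequence I G, (∀ n, b n ∈ range f) ∧ mk I G b = y := by
  obtain ⟨c, hc⟩ := hg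
  obtain ⟨a, rfl⟩ := mk_surjective I G y
  have hga (n : ℕ) : g (a (n + c)) ∈ (I ^ n • ⊤ : Submodule A G).map g := by
    refine hc n ⟨⟨_, rfl⟩, ?_⟩
    simpa [Submodule.Quotient.mk_eq_zero] using congr($hy |>.val (n + c))
  choose w hw hgw using hga
  obtain ⟨b, hb, hba⟩ := exists_mk_eq_of_sub_mem a (fun n => a (n + c) - w n) fun n => by
    simpa [sub_right_comm] using sub_mem (a.sub_shift_mem n c) (hw n)
  refine ⟨b, fun n => (hfg _).mp ?_, hba⟩
  simp [hb, hgw]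

theorem map_exact_of_isAdicallyStrict {f : F →ₗ[A] G} {g : G →ₗ[A] P} (hfg : Function.Exact f g)
    (hf : f.IsAdicallyStrict I) (hg : g.IsAdicallyStrict I) :
    Function.Exact (map I f) (map I g) := by
  refine LinearMap.exact_of_comp_eq_zero_of_ker_le_range ?_ fun y hy => ?_
  · rw [map_comp, hfg.linearMap_comp_eq_zero, map_zero]
  · obtain ⟨b, hb, rfl⟩ := exists_mk_eq_of_map_eq_zero hfg hg hy
    exact mk_mem_range_map_of_forall_mem_range hf b hb

theorem pi_map_mulVecLinOn {m n : Type*} [Fintype n] (a : Matrix m n A)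
    (x : AdicCompletion I (n → M)) (i : m) :
    pi I (fun _ => M) (map I (a.mulVecLinOn M) x) i = ∑ j, a i j • pi I (fun _ => M) x j := by
  induction x using AdicCompletion.induction_on with
  | h x =>
    ext p
    simp only [map_mk, pi_apply_coe, mk_apply_coe, AdicCauchySequence.map_apply_coe, mkQ_apply,
      reduceModIdeal_apply, coe_proj, Function.eval, Matrix.mulVecLinOn_apply, val_sum,
      Finset.sum_apply, val_smul_apply]
    rw [← Submodule.mkQ_apply, map_sum]
    simp

end AdicCompletion

end

/-- Let `A` be a noetherian commutative ring, `𝔞` an ideal, and `M` a flat `A`-module.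
Then the `𝔞`-adic completion `M̂ = lim M/𝔞^{k+1}M` is a flat `A`-module. -/
theorem adicCompletion_flat_of_flat {A : Type*} [CommRing A] [IsNoetherianRing A]
    (a : Ideal A) (M : Type*) [AddCommGroup M] [Module A M] [Module.Flat A M] :
    Module.Flat A (AdicCompletion a M) := by
  refine Module.Flat.of_forall_isTrivialRelation fun {l g y} hgy => ?_
  let G : Matrix (Fin 1) (Fin l) A := Matrix.of fun _ => g
  obtain ⟨k, T, hT⟩ := G.exists_exact_mulVecLin
  have hexact := AdicCompletion.map_exact_of_isAdicallyStrict (Matrix.exact_mulVecLinOn (M := M) hT)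
    (T.isAdicallyStrict_mulVecLinOn a) (G.isAdicallyStrict_mulVecLinOn a)
  let e := AdicCompletion.piEquivOfFintype a fun _ : Fin l => M
  have he (x : AdicCompletion a (Fin l → M)) : AdicCompletion.pi a _ x = e x :=
    (AdicCompletion.piEquivOfFintype_apply ..).symm
  have hy : AdicCompletion.map a (G.mulVecLinOn M) (e.symm y) = 0 :=
    (AdicCompletion.piEquivOfFintype a _).injective <| funext fun _ => by
      simpa [AdicCompletion.pi_map_mulVecLinOn, G, he] using hgy
  obtain ⟨Z, hZ⟩ := (hexact (e.symm y)).mp hy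
  refine ⟨k, T, AdicCompletion.pi a _ Z, fun i => ?_, fun j => ?_⟩
  · simpa [AdicCompletion.pi_map_mulVecLinOn, he] using congr(AdicCompletion.pi a _ $hZ i).symm
  · simpa [G, Matrix.mulVec, dotProduct] using congr($(hT.apply_apply_eq_zero (Pi.single j 1)) 0)
end
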